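/- arXiv:2402.15714 — 5 statements merged into one kernel-verified Lean document; each statement's English description precedes it below -/
import Mathlib

section
/- Let f₀, f₁ : (G, u₀) → (H, v₀) be pointed graph maps and let F : G ⊗ I_m → H be a pointed A-homotopy from f₀ to f₁ (so F(•,0) = f₀, F(•,m) = f₁, and F(u₀,t) = v₀ for all t). Then the map Φ : ΩG ⊗ I_m → ΩH defined by Φ(ω, t)(s) = F(ω(s), t) is a pointed A-homotopy from Ωf₀ to Ωf₁. In particular, Ω defines an endofunctor on the naive discrete homotopy category of pointed graphs. -/
open SimpleGraph

/-- A graph map between simple graphs: adjacent vertices are sent to equal or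
adjacent vertices. -/
def IsGraphMap {V W : Type} (G : SimpleGraph V) (H : SimpleGraph W) (f : V → W) : Prop :=
  ∀ ⦃u v : V⦄, G.Adj u v → f u = f v ∨ H.Adj (f u) (f v)

lemma IsGraphMap.comp {U V W : Type} {A : SimpleGraph U} {B : SimpleGraph V} {C : SimpleGraph W}
    {F : U → V} {g : V → W} (hF : IsGraphMap A B F) (hg : IsGraphMap B C g) :
    IsGraphMap A C (g ∘ F) := by
  intro u v h
  rcases hF h with h' | h'
  · exact Or.inl (congrArg g h')
  · exact hg h'

/-- The infinite path graph `I_∞` on `ℤ`, with edges `i (i+1)`. -/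
def pathZ : SimpleGraph ℤ := SimpleGraph.fromRel (fun i j => j = i + 1)

/-- The finite path graph `I_m` with vertices `0, …, m` and edges `i (i+1)`. -/
def pathI (m : ℕ) : SimpleGraph (Fin (m + 1)) :=
  SimpleGraph.fromRel (fun i j => (j : ℕ) = (i : ℕ) + 1)

/-- A pointed graph: a simple graph together with a chosen base vertex. -/
structure PtdGraph where
  V : Type
  G : SimpleGraph V
  pt : V

/-- A pointed graph map: a graph map preserving the base vertices. -/
def IsPtdMap (G H : PtdGraph) (f : G.V → H.V) : Prop :=
  IsGraphMap G.G H.G f ∧ f G.pt = H.pt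

/-- The pointed Cartesian (box) product of pointed graphs. -/
def PtdProd (G H : PtdGraph) : PtdGraph where
  V := G.V × H.V
  G := G.G □ H.G
  pt := (G.pt, H.pt)

/-- Pointed A-homotopy between two maps of pointed graphs:
a graph map `F : G ⊗ I_m → H` with `F(•,0) = f`, `F(•,m) = g` and `F(u₀,t) = v₀`. -/
def PtdHomotopic (G H : PtdGraph) (f g : G.V → H.V) : Prop :=
  ∃ (m : ℕ) (F : G.V × Fin (m + 1) → H.V),
    IsGraphMap (G.G □ pathI m) H.G F ∧
    (∀ u, F (u, 0) = f u) ∧ (∀ u, F (u, Fin.last m) = g u) ∧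
    (∀ t, F (G.pt, t) = H.pt)

/-- `ω : I_∞ → G` is a pointed path of length `l`. -/
def IsPathOfLen (G : PtdGraph) (l : ℕ) (ω : ℤ → G.V) : Prop :=
  IsGraphMap pathZ G.G ω ∧ (∀ t : ℤ, t ≤ 0 → ω t = G.pt) ∧
    (∀ t : ℤ, (l : ℤ) ≤ t → ω t = ω l)

/-- `ω : I_∞ → G` is a pointed path of some finite length. -/
def IsPath (G : PtdGraph) (ω : ℤ → G.V) : Prop := ∃ l : ℕ, IsPathOfLen G l ω

/-- `ω : I_∞ → G` is a loop of length `l`: a path of length `l` with `ω l = u₀`. -/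
def IsLoopOfLen (G : PtdGraph) (l : ℕ) (ω : ℤ → G.V) : Prop :=
  IsPathOfLen G l ω ∧ ω l = G.pt

/-- `ω : I_∞ → G` is a loop of some finite length. -/
def IsLoop (G : PtdGraph) (ω : ℤ → G.V) : Prop := ∃ l : ℕ, IsLoopOfLen G l ω

lemma constPathOfLen (G : PtdGraph) (l : ℕ) : IsPathOfLen G l (fun _ => G.pt) :=
  ⟨fun _ _ _ => Or.inl rfl, fun _ _ => rfl, fun _ _ => rfl⟩

lemma constLoopOfLen (G : PtdGraph) (l : ℕ) : IsLoopOfLen G l (fun _ => G.pt) :=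
  ⟨constPathOfLen G l, rfl⟩

/-- Two paths `ω, ω'` are joined by a one-step homotopy: there is a graph map
`F : I_∞ ⊗ I₁ → G` with `F(•,0) = ω` and `F(•,1) = ω'`. -/
def pathRel (G : PtdGraph) (ω ω' : ℤ → G.V) : Prop :=
  ∃ F : ℤ × Fin 2 → G.V, IsGraphMap (pathZ □ pathI 1) G.G F ∧
    (∀ t, F (t, 0) = ω t) ∧ (∀ t, F (t, 1) = ω' t)

/-- The path graph `PG` of a pointed graph `G`. -/
def PathGraph (G : PtdGraph) : PtdGraph where
  V := {ω : ℤ → G.V // IsPath G ω}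
  G := SimpleGraph.fromRel (fun ω ω' => pathRel G ω.1 ω'.1)
  pt := ⟨fun _ => G.pt, 0, constPathOfLen G 0⟩

/-- The loop graph `ΩG` of a pointed graph `G`: the induced subgraph of `PG` on loops. -/
def LoopGraph (G : PtdGraph) : PtdGraph where
  V := {ω : ℤ → G.V // IsLoop G ω}
  G := SimpleGraph.fromRel (fun ω ω' => pathRel G ω.1 ω'.1)
  pt := ⟨fun _ => G.pt, 0, constLoopOfLen G 0⟩

/-- The induced subgraph `Ω_l G` of `ΩG` on loops of length `l`. -/
def LoopGraphL (G : PtdGraph) (l : ℕ) : PtdGraph where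
  V := {ω : ℤ → G.V // IsLoopOfLen G l ω}
  G := SimpleGraph.fromRel (fun ω ω' => pathRel G ω.1 ω'.1)
  pt := ⟨fun _ => G.pt, constLoopOfLen G l⟩

/-- The exponential graph `G^H`: vertices are the pointed graph maps `H → G`, two distinct
maps being adjacent iff they are pointwise equal-or-adjacent; based at the constant map. -/
def ExpGraph (G H : PtdGraph) : PtdGraph where
  V := {ω : H.V → G.V // IsPtdMap H G ω}
  G := SimpleGraph.fromRel
    (fun ω ω' => ∀ v : H.V, ω.1 v = ω'.1 v ∨ G.G.Adj (ω.1 v) (ω'.1 v))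
  pt := ⟨fun _ => G.pt, fun _ _ _ => Or.inl rfl, rfl⟩

/-- The mapping fiber `Mf` of a pointed graph map `f : G → H`: the induced subgraph of
`G ⊗ PH` on pairs `(u, ω)` with `ω` a path in `H` ending at `f u`. -/
def MappingFiber (G H : PtdGraph) (f : G.V → H.V) (hf : f G.pt = H.pt) : PtdGraph where
  V := {p : G.V × (ℤ → H.V) // ∃ l : ℕ, IsPathOfLen H l p.2 ∧ p.2 l = f p.1}
  G := SimpleGraph.fromRel (fun p q =>
    (p.1.1 = q.1.1 ∧ pathRel H p.1.2 q.1.2) ∨ (G.G.Adj p.1.1 q.1.1 ∧ p.1.2 = q.1.2))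
  pt := ⟨(G.pt, fun _ => H.pt), 0, constPathOfLen H 0, hf.symm⟩

/-- The projection `f₂ : Mf → G`, `(u, ω) ↦ u`. -/
def fiberProj (G H : PtdGraph) (f : G.V → H.V) (hf : f G.pt = H.pt) :
    (MappingFiber G H f hf).V → G.V := fun p => p.1.1

lemma fiberProj_isPtdMap (G H : PtdGraph) (f : G.V → H.V) (hf : f G.pt = H.pt) :
    IsPtdMap (MappingFiber G H f hf) G (fiberProj G H f hf) := by
  constructor
  · intro p q h
    obtain ⟨hne, hr⟩ := (SimpleGraph.fromRel_adj _ _ _).mp h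
    rcases hr with (⟨he, -⟩ | ⟨ha, -⟩) | (⟨he, -⟩ | ⟨ha, -⟩)
    · exact Or.inl he
    · exact Or.inr ha
    · exact Or.inl he.symm
    · exact Or.inr ha.symm
  · rfl

/-- The map `k : ΩH → Mf`, `ω ↦ (u₀, ω)`. -/
def kmap (G H : PtdGraph) (f : G.V → H.V) (hf : f G.pt = H.pt) :
    (LoopGraph H).V → (MappingFiber G H f hf).V :=
  fun ω => ⟨(G.pt, ω.1), by
    obtain ⟨l, hl, he⟩ := ω.2
    exact ⟨l, hl, by rw [hf]; exact he⟩⟩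

lemma kmap_isPtdMap (G H : PtdGraph) (f : G.V → H.V) (hf : f G.pt = H.pt) :
    IsPtdMap (LoopGraph H) (MappingFiber G H f hf) (kmap G H f hf) := by
  constructor
  · intro ω ω' h
    obtain ⟨hne, hr⟩ := (SimpleGraph.fromRel_adj _ _ _).mp h
    refine Or.inr ((SimpleGraph.fromRel_adj _ _ _).mpr ⟨?_, ?_⟩)
    · intro hc
      exact hne (Subtype.ext (congrArg Prod.snd (congrArg Subtype.val hc)))
    · rcases hr with h' | h'
      · exact Or.inl (Or.inl ⟨rfl, h'⟩)
      · exact Or.inr (Or.inl ⟨rfl, h'⟩)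
  · exact Subtype.ext rfl

/-- Composition of a loop with a pointed graph map is a loop. -/
lemma loopComp {G H : PtdGraph} (f : G.V → H.V) (hmap : IsGraphMap G.G H.G f)
    (hpt : f G.pt = H.pt) {ω : ℤ → G.V} (hω : IsLoop G ω) : IsLoop H (f ∘ ω) := by
  obtain ⟨l, ⟨hgm, h0, hl⟩, he⟩ := hω
  refine ⟨l, ⟨hgm.comp hmap, ?_, ?_⟩, ?_⟩
  · intro t ht
    show f (ω t) = H.pt
    rw [h0 t ht, hpt]
  · intro t ht
    show f (ω t) = f (ω l)
    rw [hl t ht]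
  · show f (ω l) = H.pt
    rw [he, hpt]

/-- The looped map `Ωf : ΩG → ΩH`, `ω ↦ f ∘ ω`. -/
def OmegaMap (G H : PtdGraph) (f : G.V → H.V) (hmap : IsGraphMap G.G H.G f)
    (hpt : f G.pt = H.pt) : (LoopGraph G).V → (LoopGraph H).V :=
  fun ω => ⟨f ∘ ω.1, loopComp f hmap hpt ω.2⟩

lemma pathRel_comp {G H : PtdGraph} {f : G.V → H.V} (hmap : IsGraphMap G.G H.G f)
    {ω ω' : ℤ → G.V} (h : pathRel G ω ω') : pathRel H (f ∘ ω) (f ∘ ω') := by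
  obtain ⟨F, hF, h0, h1⟩ := h
  exact ⟨f ∘ F, hF.comp hmap, fun t => congrArg f (h0 t), fun t => congrArg f (h1 t)⟩

lemma OmegaMap_isPtdMap (G H : PtdGraph) (f : G.V → H.V) (hmap : IsGraphMap G.G H.G f)
    (hpt : f G.pt = H.pt) :
    IsPtdMap (LoopGraph G) (LoopGraph H) (OmegaMap G H f hmap hpt) := by
  constructor
  · intro ω ω' h
    obtain ⟨hne, hr⟩ := (SimpleGraph.fromRel_adj _ _ _).mp h
    by_cases heq : f ∘ ω.1 = f ∘ ω'.1
    · exact Or.inl (Subtype.ext heq)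
    · refine Or.inr ((SimpleGraph.fromRel_adj _ _ _).mpr ⟨?_, ?_⟩)
      · intro hc
        exact heq (congrArg Subtype.val hc)
      · rcases hr with h' | h'
        · exact Or.inl (pathRel_comp hmap h')
        · exact Or.inr (pathRel_comp hmap h')
  · exact Subtype.ext (funext fun _ => hpt)

/-- A subloop-length condition: every subloop of the loop `ω` (of length `l`)
has sublength at most 4. -/
def SubloopsShort (G : PtdGraph) (l : ℕ) (ω : ℤ → G.V) : Prop :=
  ∀ i₁ i₂ : ℤ, 0 ≤ i₁ → i₁ < i₂ → i₂ ≤ (l : ℤ) →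
    ω i₁ = G.pt → ω i₂ = G.pt → (∀ t : ℤ, i₁ < t → t < i₂ → ω t ≠ G.pt) →
    (ω '' Set.Icc i₁ i₂).ncard ≤ 4

/-- Every loop of the pointed graph `G` has all of its subloops of sublength at most 4. -/
def AllLoopsShort (G : PtdGraph) : Prop :=
  ∀ (l : ℕ) (ω : ℤ → G.V), IsLoopOfLen G l ω → SubloopsShort G l ω

/-- Exactness of `G₁ → G₂ → G₃` in the naive pointed discrete homotopy category:
for every pointed graph `K`, the image of `[K,G₁] → [K,G₂]` equals the kernel of
`[K,G₂] → [K,G₃]`. -/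
def ExactSeq (G₁ G₂ G₃ : PtdGraph) (f : G₁.V → G₂.V) (g : G₂.V → G₃.V) : Prop :=
  ∀ (K : PtdGraph) (ψ : K.V → G₂.V), IsPtdMap K G₂ ψ →
    (PtdHomotopic K G₃ (g ∘ ψ) (fun _ => G₃.pt) ↔
      ∃ φ : K.V → G₁.V, IsPtdMap K G₁ φ ∧ PtdHomotopic K G₂ (f ∘ φ) ψ)

/-- A bundled pointed graph map. -/
structure PtdMapB (G H : PtdGraph) where
  toFun : G.V → H.V
  isPtd : IsPtdMap G H toFun

/-- Iterated loop graph `Ωⁿ G`. -/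
def OmegaIter : ℕ → PtdGraph → PtdGraph
  | 0, G => G
  | n + 1, G => LoopGraph (OmegaIter n G)

/-- Iterated looped map `Ωⁿ f`. -/
def OmegaIterMap (G H : PtdGraph) : ∀ n : ℕ, PtdMapB G H → PtdMapB (OmegaIter n G) (OmegaIter n H)
  | 0, f => f
  | n + 1, f =>
    ⟨OmegaMap (OmegaIter n G) (OmegaIter n H) (OmegaIterMap G H n f).toFun
        (OmegaIterMap G H n f).isPtd.1 (OmegaIterMap G H n f).isPtd.2,
      OmegaMap_isPtdMap _ _ _ _ _⟩
/-- `Mf₁`, the mapping fiber of `f₁ : G → H`. -/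
def Mf1 (G H : PtdGraph) (f : G.V → H.V) (hf : f G.pt = H.pt) : PtdGraph :=
  MappingFiber G H f hf

/-- `f₂ : Mf₁ → G`, `(u, ω) ↦ u`. -/
def f2 (G H : PtdGraph) (f : G.V → H.V) (hf : f G.pt = H.pt) :
    (Mf1 G H f hf).V → G.V := fiberProj G H f hf

/-- `Mf₂`, the mapping fiber of `f₂ : Mf₁ → G`. -/
def Mf2 (G H : PtdGraph) (f : G.V → H.V) (hf : f G.pt = H.pt) : PtdGraph :=
  MappingFiber (Mf1 G H f hf) G (f2 G H f hf) rfl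

/-- `f₃ : Mf₂ → Mf₁`. -/
def f3 (G H : PtdGraph) (f : G.V → H.V) (hf : f G.pt = H.pt) :
    (Mf2 G H f hf).V → (Mf1 G H f hf).V :=
  fiberProj (Mf1 G H f hf) G (f2 G H f hf) rfl

/-- `Mf₃`, the mapping fiber of `f₃ : Mf₂ → Mf₁`. -/
def Mf3 (G H : PtdGraph) (f : G.V → H.V) (hf : f G.pt = H.pt) : PtdGraph :=
  MappingFiber (Mf2 G H f hf) (Mf1 G H f hf) (f3 G H f hf) rfl

/-- `f₄ : Mf₃ → Mf₂`, `(u, ω, β, γ) ↦ (u, ω, β)`. -/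
def f4 (G H : PtdGraph) (f : G.V → H.V) (hf : f G.pt = H.pt) :
    (Mf3 G H f hf).V → (Mf2 G H f hf).V :=
  fiberProj (Mf2 G H f hf) (Mf1 G H f hf) (f3 G H f hf) rfl

/-- `j : ΩH → Mf₂`, `ω ↦ (u₀, ω, β₀)`. -/
def jmap (G H : PtdGraph) (f : G.V → H.V) (hf : f G.pt = H.pt) :
    (LoopGraph H).V → (Mf2 G H f hf).V :=
  fun ω => ⟨(kmap G H f hf ω, fun _ => G.pt), 0, constPathOfLen G 0, rfl⟩

/-- `j' : ΩG → Mf₃`, `β ↦ (u₀, ω₀, β, γ₀)`. -/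
def j'map (G H : PtdGraph) (f : G.V → H.V) (hf : f G.pt = H.pt) :
    (LoopGraph G).V → (Mf3 G H f hf).V :=
  fun β =>
    ⟨(⟨((Mf1 G H f hf).pt, β.1), by
        obtain ⟨l, hl, he⟩ := β.2
        exact ⟨l, hl, he⟩⟩, fun _ => (Mf1 G H f hf).pt),
      0, constPathOfLen (Mf1 G H f hf) 0, rfl⟩

/-- A vertex `(u, t)` of `G ⊗ I_∞` to be collapsed to the base vertex of the
reduced suspension `Σ_l G`. -/
def SuspBase (G : PtdGraph) (l : ℕ) (p : G.V × ℤ) : Prop :=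
  p.2 ≤ 0 ∨ (l : ℤ) ≤ p.2 ∨ p.1 = G.pt

/-- The identification relation defining the reduced suspension `Σ_l G`. -/
def suspRel (G : PtdGraph) (l : ℕ) (p q : G.V × ℤ) : Prop :=
  p = q ∨ (SuspBase G l p ∧ SuspBase G l q)

/-- The reduced suspension `Σ_l G` of a pointed graph `G`: the quotient of `G ⊗ I_∞`
collapsing all vertices `(u, t)` with `t ≤ 0` or `t ≥ l`, together with all `(u₀, t)`,
to a single base vertex; two distinct classes are adjacent iff they have adjacent
representatives. -/
def Susp (G : PtdGraph) (l : ℕ) : PtdGraph where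
  V := Quot (suspRel G l)
  G := SimpleGraph.fromRel (fun a b =>
    ∃ p q : G.V × ℤ, Quot.mk (suspRel G l) p = a ∧ Quot.mk (suspRel G l) q = b ∧
      (G.G □ pathZ).Adj p q)
  pt := Quot.mk (suspRel G l) (G.pt, 0)

/-- The type of pointed graph maps `K → G`. -/
def PtdMapSub (K G : PtdGraph) := {f : K.V → G.V // IsPtdMap K G f}

/-- The pointed set `[K, G]` of pointed A-homotopy classes of pointed graph maps `K → G`. -/
def HtpyCl (K G : PtdGraph) :=
  Quot (fun f g : PtdMapSub K G => PtdHomotopic K G f.1 g.1)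

lemma slice_map {G H : PtdGraph} {m : ℕ} {F : G.V × Fin (m + 1) → H.V}
    (hF : IsGraphMap (G.G □ pathI m) H.G F) (t : Fin (m + 1)) :
    IsGraphMap G.G H.G (fun u => F (u, t)) := by
  intro u v h
  exact hF (SimpleGraph.boxProd_adj.mpr (Or.inl ⟨h, rfl⟩))

lemma pathI1_flip {a b : Fin 2} (h : (pathI 1).Adj a b) :
    (pathI 1).Adj (1 - a) (1 - b) := by
  obtain ⟨hne, hr⟩ := (SimpleGraph.fromRel_adj _ _ _).mp h
  fin_cases a <;> fin_cases b <;> simp_all [pathI, SimpleGraph.fromRel_adj]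

lemma pathRel_symm {G : PtdGraph} {ω ω' : ℤ → G.V} (h : pathRel G ω ω') :
    pathRel G ω' ω := by
  obtain ⟨F, hF, h0, h1⟩ := h
  refine ⟨fun p => F (p.1, 1 - p.2), ?_, fun t => by simpa using h1 t,
    fun t => by simpa using h0 t⟩
  intro a b hab
  rcases SimpleGraph.boxProd_adj.mp hab with ⟨hz, he⟩ | ⟨hi, hs⟩
  · exact hF (SimpleGraph.boxProd_adj.mpr (Or.inl ⟨hz, by rw [he]⟩))
  · exact hF (SimpleGraph.boxProd_adj.mpr (Or.inr ⟨pathI1_flip hi, by rw [hs]⟩))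

/-- a pointed A-homotopy `F : G ⊗ I_m → H` from `f₀` to `f₁` induces a
pointed A-homotopy `Φ : ΩG ⊗ I_m → ΩH`, `Φ(ω,t)(s) = F(ω(s),t)`, from `Ωf₀` to `Ωf₁`;
in particular `Ωf₀` and `Ωf₁` are pointed A-homotopic, so `Ω` is an endofunctor on the
naive discrete homotopy category of pointed graphs. -/
theorem Omega_homotopy (G H : PtdGraph) (f₀ f₁ : G.V → H.V)
    (hf₀ : IsPtdMap G H f₀) (hf₁ : IsPtdMap G H f₁)
    (m : ℕ) (F : G.V × Fin (m + 1) → H.V)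
    (hF : IsGraphMap (G.G □ pathI m) H.G F)
    (hF0 : ∀ u, F (u, 0) = f₀ u) (hFm : ∀ u, F (u, Fin.last m) = f₁ u)
    (hFpt : ∀ t, F (G.pt, t) = H.pt) :
    (∀ (ω : ℤ → G.V) (t : Fin (m + 1)), IsLoop G ω → IsLoop H (fun s => F (ω s, t))) ∧
    (∀ hwd : ∀ (ω : (LoopGraph G).V) (t : Fin (m + 1)), IsLoop H (fun s => F (ω.1 s, t)),
      IsGraphMap ((LoopGraph G).G □ pathI m) (LoopGraph H).G
        (fun p => (⟨fun s => F (p.1.1 s, p.2), hwd p.1 p.2⟩ : (LoopGraph H).V)) ∧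
      (∀ ω : (LoopGraph G).V,
        (⟨fun s => F (ω.1 s, 0), hwd ω 0⟩ : (LoopGraph H).V)
          = OmegaMap G H f₀ hf₀.1 hf₀.2 ω) ∧
      (∀ ω : (LoopGraph G).V,
        (⟨fun s => F (ω.1 s, Fin.last m), hwd ω (Fin.last m)⟩ : (LoopGraph H).V)
          = OmegaMap G H f₁ hf₁.1 hf₁.2 ω) ∧
      (∀ t : Fin (m + 1),
        (⟨fun s => F ((LoopGraph G).pt.1 s, t), hwd (LoopGraph G).pt t⟩ : (LoopGraph H).V)
          = (LoopGraph H).pt)) ∧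
    PtdHomotopic (LoopGraph G) (LoopGraph H)
      (OmegaMap G H f₀ hf₀.1 hf₀.2) (OmegaMap G H f₁ hf₁.1 hf₁.2) := by
  have part1 : ∀ (ω : ℤ → G.V) (t : Fin (m + 1)), IsLoop G ω →
      IsLoop H (fun s => F (ω s, t)) := by
    rintro ω t ⟨l, ⟨hgm, h0, hl⟩, he⟩
    refine ⟨l, ⟨hgm.comp (slice_map hF t), ?_, ?_⟩, ?_⟩
    · intro s hs; show F (ω s, t) = H.pt; rw [h0 s hs, hFpt]
    · intro s hs; show F (ω s, t) = F (ω l, t); rw [hl s hs]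
    · show F (ω l, t) = H.pt; rw [he, hFpt]
  have part2 : ∀ hwd : ∀ (ω : (LoopGraph G).V) (t : Fin (m + 1)),
      IsLoop H (fun s => F (ω.1 s, t)),
      IsGraphMap ((LoopGraph G).G □ pathI m) (LoopGraph H).G
        (fun p => (⟨fun s => F (p.1.1 s, p.2), hwd p.1 p.2⟩ : (LoopGraph H).V)) ∧
      (∀ ω : (LoopGraph G).V,
        (⟨fun s => F (ω.1 s, 0), hwd ω 0⟩ : (LoopGraph H).V)
          = OmegaMap G H f₀ hf₀.1 hf₀.2 ω) ∧
      (∀ ω : (LoopGraph G).V,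
        (⟨fun s => F (ω.1 s, Fin.last m), hwd ω (Fin.last m)⟩ : (LoopGraph H).V)
          = OmegaMap G H f₁ hf₁.1 hf₁.2 ω) ∧
      (∀ t : Fin (m + 1),
        (⟨fun s => F ((LoopGraph G).pt.1 s, t), hwd (LoopGraph G).pt t⟩ : (LoopGraph H).V)
          = (LoopGraph H).pt) := by
    intro hwd
    refine ⟨?_, ?_, ?_, ?_⟩
    · rintro ⟨ω, t⟩ ⟨ω', t'⟩ hadj
      rcases SimpleGraph.boxProd_adj.mp hadj with ⟨hloop, ht⟩ | ⟨htadj, hω⟩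
      · -- loops adjacent, same time
        dsimp at ht; subst ht
        obtain ⟨hne, hr⟩ := (SimpleGraph.fromRel_adj _ _ _).mp hloop
        have hpr : pathRel G ω.1 ω'.1 := by
          rcases hr with h | h
          · exact h
          · exact pathRel_symm h
        obtain ⟨F', hF', h0, h1⟩ := hpr
        have hrel : pathRel H (fun s => F (ω.1 s, t)) (fun s => F (ω'.1 s, t)) :=
          ⟨fun r => F (F' r, t), hF'.comp (slice_map hF t),
            fun s => by simp [h0 s], fun s => by simp [h1 s]⟩
        by_cases heq : (fun s => F (ω.1 s, t)) = (fun s => F (ω'.1 s, t))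
        · exact Or.inl (Subtype.ext heq)
        · refine Or.inr ((SimpleGraph.fromRel_adj _ _ _).mpr ⟨?_, Or.inl hrel⟩)
          intro hc; exact heq (congrArg Subtype.val hc)
      · -- same loop, adjacent times
        dsimp at hω; subst hω
        have hrel : pathRel H (fun s => F (ω.1 s, t)) (fun s => F (ω.1 s, t')) := by
          refine ⟨fun r => F (ω.1 r.1, if r.2 = 0 then t else t'), ?_, ?_, ?_⟩
          · rintro ⟨s, e⟩ ⟨s', e'⟩ hab
            dsimp only
            rcases SimpleGraph.boxProd_adj.mp hab with ⟨hz, he⟩ | ⟨hi, hs⟩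
            · dsimp only at hz he; subst he
              obtain ⟨l, ⟨hgm, -, -⟩, -⟩ := ω.2
              rcases hgm hz with h' | h'
              · exact Or.inl (by rw [h'])
              · exact hF (SimpleGraph.boxProd_adj.mpr (Or.inl ⟨h', rfl⟩))
            · dsimp only at hi hs; subst hs
              have hne2 : e ≠ e' := ((SimpleGraph.fromRel_adj _ _ _).mp hi).1
              have hadj2 : (pathI m).Adj (if e = 0 then t else t')
                  (if e' = 0 then t else t') := by
                fin_cases e <;> fin_cases e' <;> simp_all <;>
                  first | exact htadj | exact htadj.symm
              exact hF (SimpleGraph.boxProd_adj.mpr (Or.inr ⟨hadj2, rfl⟩))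
          · intro s; simp
          · intro s; simp
        by_cases heq : (fun s => F (ω.1 s, t)) = (fun s => F (ω.1 s, t'))
        · exact Or.inl (Subtype.ext heq)
        · refine Or.inr ((SimpleGraph.fromRel_adj _ _ _).mpr ⟨?_, Or.inl hrel⟩)
          intro hc; exact heq (congrArg Subtype.val hc)
    · intro ω; exact Subtype.ext (funext fun s => hF0 (ω.1 s))
    · intro ω; exact Subtype.ext (funext fun s => hFm (ω.1 s))
    · intro t; exact Subtype.ext (funext fun s => hFpt t)
  have hwd : ∀ (ω : (LoopGraph G).V) (t : Fin (m + 1)),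
      IsLoop H (fun s => F (ω.1 s, t)) := fun ω t => part1 ω.1 t ω.2
  obtain ⟨hgm, h0, hm, hpt⟩ := part2 hwd
  exact ⟨part1, part2,
    ⟨m, fun p => ⟨fun s => F (p.1.1 s, p.2), hwd p.1 p.2⟩, hgm, h0, hm, hpt⟩⟩
end

section
/- Let (G, u₀) be a pointed graph and let ω be a loop of length l in G such that every subloop of ω has sublength at most 4. Then ω is null-A-homotopic: ω lies in the same connected component of the loop graph ΩG as the constant loop ω₀. -/
open SimpleGraph

section ShortLoopProof

variable {G : PtdGraph}

lemma pathZ_adj_iff {t s : ℤ} : pathZ.Adj t s ↔ t ≠ s ∧ (s = t + 1 ∨ t = s + 1) :=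
  SimpleGraph.fromRel_adj _ _ _

lemma isGraphMap_pathZ_iff {f : ℤ → G.V} :
    IsGraphMap pathZ G.G f ↔ ∀ t : ℤ, f t = f (t + 1) ∨ G.G.Adj (f t) (f (t + 1)) := by
  constructor
  · intro h t
    exact h (pathZ_adj_iff.mpr ⟨by omega, Or.inl rfl⟩)
  · intro h u v huv
    rcases pathZ_adj_iff.mp huv with ⟨-, rfl | rfl⟩
    · exact h u
    · rcases h v with h' | h'
      · exact Or.inl h'.symm
      · exact Or.inr h'.symm

lemma mkLoop {l : ℕ} {f : ℤ → G.V}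
    (hgm : ∀ t : ℤ, f t = f (t + 1) ∨ G.G.Adj (f t) (f (t + 1)))
    (h0 : ∀ t : ℤ, t ≤ 0 → f t = G.pt) (hl : ∀ t : ℤ, (l : ℤ) ≤ t → f t = G.pt) :
    IsLoopOfLen G l f :=
  ⟨⟨isGraphMap_pathZ_iff.mpr hgm, h0, fun t ht => (hl t ht).trans (hl l le_rfl).symm⟩,
    hl l le_rfl⟩

lemma loop_pt_right {l : ℕ} {ω : ℤ → G.V} (hω : IsLoopOfLen G l ω) :
    ∀ t : ℤ, (l : ℤ) ≤ t → ω t = G.pt :=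
  fun t ht => (hω.1.2.2 t ht).trans hω.2

lemma loop_gm {l : ℕ} {ω : ℤ → G.V} (hω : IsLoopOfLen G l ω) :
    ∀ t : ℤ, ω t = ω (t + 1) ∨ G.G.Adj (ω t) (ω (t + 1)) :=
  isGraphMap_pathZ_iff.mp hω.1.1

lemma loop_step {l : ℕ} {ω : ℤ → G.V} (hω : IsLoopOfLen G l ω) {s u : ℤ} (h : u = s + 1) :
    ω s = ω u ∨ G.G.Adj (ω s) (ω u) := h ▸ loop_gm hω s

lemma support_finite {l : ℕ} {ω : ℤ → G.V} (hω : IsLoopOfLen G l ω) :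
    {t : ℤ | ω t ≠ G.pt}.Finite := by
  apply (Set.finite_Ioo 0 (l : ℤ)).subset
  intro t ht
  simp only [Set.mem_setOf_eq] at ht
  constructor
  · by_contra h
    exact ht (hω.1.2.1 t (by omega))
  · by_contra h
    exact ht (loop_pt_right hω t (by omega))

/-- One-step homotopy: two loops of the same length which are pointwise
equal-or-adjacent are connected in the loop graph. -/
lemma step_reachable {l : ℕ} {ω ω' : ℤ → G.V} (hω : IsLoopOfLen G l ω)
    (hω' : IsLoopOfLen G l ω')
    (hpw : ∀ t : ℤ, ω t = ω' t ∨ G.G.Adj (ω t) (ω' t)) :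
    (LoopGraph G).G.Reachable ⟨ω, l, hω⟩ ⟨ω', l, hω'⟩ := by
  by_cases heq : ω = ω'
  · rw [show (⟨ω, l, hω⟩ : (LoopGraph G).V) = ⟨ω', l, hω'⟩ from Subtype.ext heq]
    exact SimpleGraph.Reachable.refl _
  · apply SimpleGraph.Adj.reachable
    show (SimpleGraph.fromRel _).Adj _ _
    refine (SimpleGraph.fromRel_adj _ _ _).mpr ?_
    refine ⟨fun hc => heq (congrArg Subtype.val hc), Or.inl ?_⟩
    refine ⟨fun p => if p.2 = (0 : Fin 2) then ω p.1 else ω' p.1, ?_, ?_, ?_⟩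
    · intro p q h
      rw [SimpleGraph.boxProd_adj] at h
      rcases h with ⟨h1, h2⟩ | ⟨h1, h2⟩
      · by_cases hp : p.2 = (0 : Fin 2)
        · simp only [hp, if_pos rfl, h2 ▸ hp, if_pos]
          exact hω.1.1 h1
        · simp only [if_neg hp, if_neg (h2 ▸ hp)]
          exact hω'.1.1 h1
      · have hne : p.2 ≠ q.2 := ((SimpleGraph.fromRel_adj _ _ _).mp h1).1
        by_cases hp : p.2 = (0 : Fin 2)
        · have hq : q.2 ≠ (0 : Fin 2) := fun h => hne (hp.trans h.symm)
          simp only [if_pos hp, if_neg hq, ← h2]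
          exact hpw p.1
        · have hq : q.2 = (0 : Fin 2) := by omega
          simp only [if_neg hp, if_pos hq, ← h2]
          rcases hpw p.1 with h' | h'
          · exact Or.inl h'.symm
          · exact Or.inr h'.symm
    · intro t; simp
    · intro t; simp

/-- The key single-move lemma. -/
lemma move_exists {l : ℕ} {ω : ℤ → G.V} (hω : IsLoopOfLen G l ω)
    {S : Set G.V} (hSfin : S.Finite) (hS4 : S.ncard ≤ 4) (hptS : G.pt ∈ S)
    {i₁ i₂ t₀ : ℤ} (hi₁0 : 0 ≤ i₁) (hpt1 : ω i₁ = G.pt)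
    (H2 : ∀ t : ℤ, i₂ ≤ t → ω t = G.pt)
    (H3 : ∀ t : ℤ, i₁ ≤ t → t ≤ i₂ → ω t ∈ S)
    (ht0 : i₁ < t₀) (hω0 : ω t₀ ≠ G.pt)
    (hfw : ∀ t : ℤ, t₀ < t → ω t = G.pt) :
    ∃ ω' : ℤ → G.V, IsLoopOfLen G l ω' ∧
      (∀ t : ℤ, ω t = ω' t ∨ G.G.Adj (ω t) (ω' t)) ∧
      (∀ t : ℤ, t ≤ i₁ → ω' t = ω t) ∧
      (∀ t : ℤ, i₂ ≤ t → ω' t = G.pt) ∧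
      (∀ t : ℤ, i₁ ≤ t → t ≤ i₂ → ω' t ∈ S) ∧
      {t : ℤ | i₁ < t ∧ ω' t ≠ G.pt} ⊆ {t : ℤ | i₁ < t ∧ ω t ≠ G.pt} \ {t₀} := by
  have h0t : 0 < t₀ := by
    by_contra h
    exact hω0 (hω.1.2.1 t₀ (by omega))
  have htl : t₀ < (l : ℤ) := by
    by_contra h
    exact hω0 (loop_pt_right hω t₀ (by omega))
  have ha : G.G.Adj (ω t₀) G.pt := by
    rcases loop_gm hω t₀ with h | h
    · exact absurd (h.trans (hfw (t₀ + 1) (by omega))) hω0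
    · rwa [hfw (t₀ + 1) (by omega)] at h
  have ht₀i₂ : t₀ < i₂ := by
    by_contra h
    exact hω0 (H2 t₀ (by omega))
  have haS : ω t₀ ∈ S := H3 t₀ (by omega) (by omega)
  have hbS : ω (t₀ - 1) ∈ S := H3 (t₀ - 1) (by omega) (by omega)
  have caseA : ∀ x : G.V, x ∈ S →
      (ω (t₀ - 2) = x ∨ G.G.Adj (ω (t₀ - 2)) x) →
      (ω (t₀ - 1) = x ∨ G.G.Adj (ω (t₀ - 1)) x) →
      (x = G.pt ∨ G.G.Adj x G.pt) →
      (i₁ < t₀ - 1 ∨ x = ω (t₀ - 1)) →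
      (x = ω (t₀ - 1) ∨ ω (t₀ - 1) ≠ G.pt) →
      ∃ ω' : ℤ → G.V, IsLoopOfLen G l ω' ∧
      (∀ t : ℤ, ω t = ω' t ∨ G.G.Adj (ω t) (ω' t)) ∧
      (∀ t : ℤ, t ≤ i₁ → ω' t = ω t) ∧
      (∀ t : ℤ, i₂ ≤ t → ω' t = G.pt) ∧
      (∀ t : ℤ, i₁ ≤ t → t ≤ i₂ → ω' t ∈ S) ∧
      {t : ℤ | i₁ < t ∧ ω' t ≠ G.pt} ⊆ {t : ℤ | i₁ < t ∧ ω t ≠ G.pt} \ {t₀} := by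
    intro x hxS hxc hxb hxp hxlow hbx
    refine ⟨fun t => if t = t₀ then G.pt else if t = t₀ - 1 then x else ω t,
      mkLoop ?_ ?_ ?_, ?_, ?_, ?_, ?_, ?_⟩
    · intro t
      by_cases h1 : t = t₀
      · simp only [if_pos h1, if_neg (show ¬ t + 1 = t₀ by omega),
          if_neg (show ¬ t + 1 = t₀ - 1 by omega)]
        exact Or.inl (hfw (t + 1) (by omega)).symm
      · by_cases h2 : t = t₀ - 1
        · simp only [if_neg h1, if_pos h2, if_pos (show t + 1 = t₀ by omega)]
          exact hxp
        · by_cases h3 : t = t₀ - 2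
          · simp only [if_neg h1, if_neg h2, if_neg (show ¬ t + 1 = t₀ by omega),
              if_pos (show t + 1 = t₀ - 1 by omega)]
            rw [h3]
            exact hxc
          · simp only [if_neg h1, if_neg h2, if_neg (show ¬ t + 1 = t₀ by omega),
              if_neg (show ¬ t + 1 = t₀ - 1 by omega)]
            exact loop_gm hω t
    · intro t ht
      by_cases h2 : t = t₀ - 1
      · have hxe : x = ω (t₀ - 1) := by
          rcases hxlow with h | h
          · omega
          · exact h
        simp only [if_neg (show ¬ t = t₀ by omega), if_pos h2, hxe]
        rw [← h2]
        exact hω.1.2.1 t ht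
      · simp only [if_neg (show ¬ t = t₀ by omega), if_neg h2]
        exact hω.1.2.1 t ht
    · intro t ht
      simp only [if_neg (show ¬ t = t₀ by omega), if_neg (show ¬ t = t₀ - 1 by omega)]
      exact loop_pt_right hω t ht
    · intro t
      by_cases h1 : t = t₀
      · simp only [if_pos h1]
        rw [h1]
        exact Or.inr ha
      · by_cases h2 : t = t₀ - 1
        · simp only [if_neg h1, if_pos h2]
          rw [h2]
          exact hxb
        · simp only [if_neg h1, if_neg h2]
          exact Or.inl trivial
    · intro t ht
      by_cases h2 : t = t₀ - 1
      · have hxe : x = ω (t₀ - 1) := by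
          rcases hxlow with h | h
          · omega
          · exact h
        simp only [if_neg (show ¬ t = t₀ by omega), if_pos h2]
        rw [hxe, h2]
      · simp only [if_neg (show ¬ t = t₀ by omega), if_neg h2]
    · intro t ht
      simp only [if_neg (show ¬ t = t₀ by omega), if_neg (show ¬ t = t₀ - 1 by omega)]
      exact H2 t ht
    · intro t h1 h2
      by_cases hc1 : t = t₀
      · simp only [if_pos hc1]; exact hptS
      · by_cases hc2 : t = t₀ - 1
        · simp only [if_neg hc1, if_pos hc2]; exact hxS
        · simp only [if_neg hc1, if_neg hc2]; exact H3 t h1 h2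
    · intro t ht
      obtain ⟨ht1, ht2⟩ := ht
      simp only [Set.mem_setOf_eq] at ht2 ⊢
      by_cases hc1 : t = t₀
      · rw [if_pos hc1] at ht2
        exact absurd rfl ht2
      · refine ⟨⟨ht1, ?_⟩, by simpa using hc1⟩
        rw [if_neg hc1] at ht2
        by_cases hc2 : t = t₀ - 1
        · rw [if_pos hc2] at ht2
          rw [hc2]
          rcases hbx with h | h
          · rwa [h] at ht2
          · exact h
        · rwa [if_neg hc2] at ht2
  by_cases hb : ω (t₀ - 1) = G.pt ∨ G.G.Adj (ω (t₀ - 1)) G.pt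
  · exact caseA (ω (t₀ - 1)) hbS (loop_step hω (by omega)) (Or.inl rfl) hb
      (Or.inr rfl) (Or.inl rfl)
  push_neg at hb
  obtain ⟨hbne, hbnadj⟩ := hb
  have hbi : i₁ < t₀ - 1 := by
    rcases lt_or_eq_of_le (show i₁ ≤ t₀ - 1 by omega) with h | h
    · exact h
    · exact absurd (h ▸ hpt1) hbne
  by_cases hca : ω (t₀ - 2) = ω t₀ ∨ G.G.Adj (ω (t₀ - 2)) (ω t₀)
  · exact caseA (ω t₀) haS hca (loop_step hω (by omega)) (Or.inr ha)
      (Or.inl hbi) (Or.inr hbne)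
  push_neg at hca
  obtain ⟨hcane, hcana⟩ := hca
  have hcS : ω (t₀ - 2) ∈ S := H3 (t₀ - 2) (by omega) (by omega)
  by_cases hcp : ω (t₀ - 2) = G.pt ∨ G.G.Adj (ω (t₀ - 2)) G.pt
  · have hbc : ω (t₀ - 1) = ω (t₀ - 2) ∨ G.G.Adj (ω (t₀ - 1)) (ω (t₀ - 2)) := by
      rcases loop_step hω (show t₀ - 1 = t₀ - 2 + 1 by omega) with h | h
      · exact Or.inl h.symm
      · exact Or.inr h.symm
    exact caseA (ω (t₀ - 2)) hcS (Or.inl rfl) hbc hcp (Or.inl hbi) (Or.inr hbne)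
  push_neg at hcp
  obtain ⟨hcpne, hcpna⟩ := hcp
  -- Case B: the four vertices pt, a, b, c are distinct, and S = {pt, a, b, c}.
  have hba : G.G.Adj (ω (t₀ - 1)) (ω t₀) := by
    rcases loop_step hω (show t₀ = t₀ - 1 + 1 by omega) with h | h
    · exact absurd (h ▸ ha) hbnadj
    · exact h
  have hcb : G.G.Adj (ω (t₀ - 2)) (ω (t₀ - 1)) := by
    rcases loop_step hω (show t₀ - 1 = t₀ - 2 + 1 by omega) with h | h
    · exact absurd (h ▸ hba) hcana
    · exact h
  have hci : i₁ < t₀ - 2 := by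
    rcases lt_or_eq_of_le (show i₁ ≤ t₀ - 2 by omega) with h | h
    · exact h
    · exact absurd (h ▸ hpt1) hcpne
  have hdS : ω (t₀ - 3) ∈ S := H3 (t₀ - 3) (by omega) (by omega)
  have hab : ω t₀ ≠ ω (t₀ - 1) := fun h => hbnadj (h ▸ ha)
  have hSeq : S = {G.pt, ω t₀, ω (t₀ - 1), ω (t₀ - 2)} := by
    have hbcne : ω (t₀ - 1) ≠ ω (t₀ - 2) := fun h => hcana (h ▸ hba)
    have hsub4 : ({G.pt, ω t₀, ω (t₀ - 1), ω (t₀ - 2)} : Set G.V) ⊆ S := by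
      intro y hy
      rcases hy with rfl | rfl | rfl | rfl
      · exact hptS
      · exact haS
      · exact hbS
      · exact hcS
    have hcard : ({G.pt, ω t₀, ω (t₀ - 1), ω (t₀ - 2)} : Set G.V).ncard = 4 := by
      rw [Set.ncard_insert_of_notMem (by
          simp only [Set.mem_insert_iff, Set.mem_singleton_iff]
          push_neg
          exact ⟨Ne.symm hω0, Ne.symm hbne, Ne.symm hcpne⟩),
        Set.ncard_insert_of_notMem (by
          simp only [Set.mem_insert_iff, Set.mem_singleton_iff]
          push_neg
          exact ⟨hab, Ne.symm hcane⟩),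
        Set.ncard_insert_of_notMem (by simpa using hbcne),
        Set.ncard_singleton]
    exact (Set.eq_of_subset_of_ncard_le hsub4 (by rw [hcard]; exact hS4) hSfin).symm
  have hd : ω (t₀ - 3) = ω (t₀ - 1) ∨ ω (t₀ - 3) = ω (t₀ - 2) := by
    have hdc : ω (t₀ - 3) = ω (t₀ - 2) ∨ G.G.Adj (ω (t₀ - 3)) (ω (t₀ - 2)) :=
      loop_step hω (by omega)
    rw [hSeq] at hdS
    rcases hdS with h | h | h | h
    · exfalso
      rcases hdc with h' | h'
      · exact hcpne (h ▸ h').symm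
      · exact hcpna (h ▸ h').symm
    · exfalso
      rcases hdc with h' | h'
      · exact hcane (h ▸ h').symm
      · exact hcana (h ▸ h').symm
    · exact Or.inl h
    · exact Or.inr h
  refine ⟨fun t => if t = t₀ then G.pt else if t = t₀ - 1 then ω t₀ else
      if t = t₀ - 2 then ω (t₀ - 1) else ω t,
    mkLoop ?_ ?_ ?_, ?_, ?_, ?_, ?_, ?_⟩
  · intro t
    by_cases h1 : t = t₀
    · simp only [if_pos h1, if_neg (show ¬ t + 1 = t₀ by omega),
        if_neg (show ¬ t + 1 = t₀ - 1 by omega), if_neg (show ¬ t + 1 = t₀ - 2 by omega)]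
      exact Or.inl (hfw (t + 1) (by omega)).symm
    · by_cases h2 : t = t₀ - 1
      · simp only [if_neg h1, if_pos h2, if_pos (show t + 1 = t₀ by omega)]
        exact Or.inr ha
      · by_cases h3 : t = t₀ - 2
        · simp only [if_neg h1, if_neg h2, if_pos h3,
            if_neg (show ¬ t + 1 = t₀ by omega), if_pos (show t + 1 = t₀ - 1 by omega)]
          exact Or.inr hba
        · by_cases h4 : t = t₀ - 3
          · simp only [if_neg h1, if_neg h2, if_neg h3,
              if_neg (show ¬ t + 1 = t₀ by omega),
              if_neg (show ¬ t + 1 = t₀ - 1 by omega),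
              if_pos (show t + 1 = t₀ - 2 by omega)]
            rw [h4]
            rcases hd with h | h
            · exact Or.inl h
            · exact Or.inr (h ▸ hcb)
          · simp only [if_neg h1, if_neg h2, if_neg h3,
              if_neg (show ¬ t + 1 = t₀ by omega), if_neg (show ¬ t + 1 = t₀ - 1 by omega),
              if_neg (show ¬ t + 1 = t₀ - 2 by omega)]
            exact loop_gm hω t
  · intro t ht
    simp only [if_neg (show ¬ t = t₀ by omega), if_neg (show ¬ t = t₀ - 1 by omega),
      if_neg (show ¬ t = t₀ - 2 by omega)]
    exact hω.1.2.1 t ht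
  · intro t ht
    simp only [if_neg (show ¬ t = t₀ by omega), if_neg (show ¬ t = t₀ - 1 by omega),
      if_neg (show ¬ t = t₀ - 2 by omega)]
    exact loop_pt_right hω t ht
  · intro t
    by_cases h1 : t = t₀
    · simp only [if_pos h1]
      rw [h1]
      exact Or.inr ha
    · by_cases h2 : t = t₀ - 1
      · simp only [if_neg h1, if_pos h2]
        rw [h2]
        exact Or.inr hba
      · by_cases h3 : t = t₀ - 2
        · simp only [if_neg h1, if_neg h2, if_pos h3]
          rw [h3]
          exact Or.inr hcb
        · simp only [if_neg h1, if_neg h2, if_neg h3]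
          exact Or.inl trivial
  · intro t ht
    simp only [if_neg (show ¬ t = t₀ by omega), if_neg (show ¬ t = t₀ - 1 by omega),
      if_neg (show ¬ t = t₀ - 2 by omega)]
  · intro t ht
    simp only [if_neg (show ¬ t = t₀ by omega), if_neg (show ¬ t = t₀ - 1 by omega),
      if_neg (show ¬ t = t₀ - 2 by omega)]
    exact H2 t ht
  · intro t h1 h2
    by_cases hc1 : t = t₀
    · simp only [if_pos hc1]; exact hptS
    · by_cases hc2 : t = t₀ - 1
      · simp only [if_neg hc1, if_pos hc2]; exact haS
      · by_cases hc3 : t = t₀ - 2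
        · simp only [if_neg hc1, if_neg hc2, if_pos hc3]; exact hbS
        · simp only [if_neg hc1, if_neg hc2, if_neg hc3]; exact H3 t h1 h2
  · intro t ht
    obtain ⟨ht1, ht2⟩ := ht
    simp only [Set.mem_setOf_eq] at ht2 ⊢
    by_cases hc1 : t = t₀
    · rw [if_pos hc1] at ht2
      exact absurd rfl ht2
    · refine ⟨⟨ht1, ?_⟩, by simpa using hc1⟩
      by_cases hc2 : t = t₀ - 1
      · rw [hc2]; exact hbne
      · by_cases hc3 : t = t₀ - 2
        · rw [hc3]; exact hcpne
        · rwa [if_neg hc1, if_neg hc2, if_neg hc3] at ht2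

end ShortLoopProof
section ShortLoopProof2

variable {G : PtdGraph}

/-- If `ω` is the base point everywhere above `i₁` and `τ` agrees with `ω`
below `i₁` and is the base point above, the two loops are equal. -/
lemma reach_of_tail_const {l : ℕ} {ω τ : ℤ → G.V} (hω : IsLoopOfLen G l ω)
    (hτ : IsLoopOfLen G l τ) {i₁ : ℤ}
    (hτ1 : ∀ t : ℤ, t ≤ i₁ → τ t = ω t) (hτ2 : ∀ t : ℤ, i₁ < t → τ t = G.pt)
    (hconst : ∀ t : ℤ, i₁ < t → ω t = G.pt) :
    (LoopGraph G).G.Reachable ⟨ω, l, hω⟩ ⟨τ, l, hτ⟩ := by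
  have heq : ω = τ := funext fun t => by
    by_cases h : i₁ < t
    · rw [hconst t h, hτ2 t h]
    · rw [hτ1 t (by omega)]
  rw [show (⟨ω, l, hω⟩ : (LoopGraph G).V) = ⟨τ, l, hτ⟩ from Subtype.ext heq]
  exact SimpleGraph.Reachable.refl _

/-- Contracting a single (rightmost) subloop with at most 4 values. -/
lemma inner_contract (G : PtdGraph) (l : ℕ) (S : Set G.V) (hSfin : S.Finite)
    (hS4 : S.ncard ≤ 4) (hptS : G.pt ∈ S) (i₁ i₂ : ℤ) (hi₁0 : 0 ≤ i₁) :
    ∀ n : ℕ, ∀ ω τ : ℤ → G.V, ∀ (hω : IsLoopOfLen G l ω) (hτ : IsLoopOfLen G l τ),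
      (∀ t : ℤ, t ≤ i₁ → τ t = ω t) → (∀ t : ℤ, i₁ < t → τ t = G.pt) →
      {t : ℤ | i₁ < t ∧ ω t ≠ G.pt}.ncard ≤ n →
      (∀ t : ℤ, i₂ ≤ t → ω t = G.pt) →
      (∀ t : ℤ, i₁ ≤ t → t ≤ i₂ → ω t ∈ S) →
      ω i₁ = G.pt →
      (LoopGraph G).G.Reachable ⟨ω, l, hω⟩ ⟨τ, l, hτ⟩ := by
  intro n
  induction n with
  | zero =>
    intro ω τ hω hτ hτ1 hτ2 hn H2 H3 H4
    have hfin : {t : ℤ | i₁ < t ∧ ω t ≠ G.pt}.Finite :=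
      (support_finite hω).subset (fun t ht => ht.2)
    have hempty : {t : ℤ | i₁ < t ∧ ω t ≠ G.pt} = ∅ := by
      rw [← Set.ncard_eq_zero hfin]
      omega
    refine reach_of_tail_const hω hτ hτ1 hτ2 (fun t ht => ?_)
    by_contra h
    exact absurd (show t ∈ (∅ : Set ℤ) by rw [← hempty]; exact ⟨ht, h⟩) (Set.notMem_empty t)
  | succ n ih =>
    intro ω τ hω hτ hτ1 hτ2 hn H2 H3 H4
    by_cases hne : {t : ℤ | i₁ < t ∧ ω t ≠ G.pt}.Nonempty
    · obtain ⟨t₀, ⟨ht0, hω0⟩, hmax⟩ := Int.exists_greatest_of_bdd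
        (P := fun t => i₁ < t ∧ ω t ≠ G.pt)
        ⟨l, fun z hz => by
          by_contra h
          exact hz.2 (loop_pt_right hω z (by omega))⟩
        hne
      have hfw : ∀ t : ℤ, t₀ < t → ω t = G.pt := by
        intro t ht
        by_contra h
        have := hmax t ⟨by omega, h⟩
        omega
      obtain ⟨ω₁, hω₁, hpw, hlow, H2', H3', hsub'⟩ :=
        move_exists hω hSfin hS4 hptS hi₁0 H4 H2 H3 ht0 hω0 hfw
      have hfin : {t : ℤ | i₁ < t ∧ ω t ≠ G.pt}.Finite :=
        (support_finite hω).subset (fun t ht => ht.2)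
      have hcard : {t : ℤ | i₁ < t ∧ ω₁ t ≠ G.pt}.ncard ≤ n := by
        have h1 : {t : ℤ | i₁ < t ∧ ω₁ t ≠ G.pt}.ncard ≤
            ({t : ℤ | i₁ < t ∧ ω t ≠ G.pt} \ {t₀}).ncard :=
          Set.ncard_le_ncard hsub' hfin.diff
        have h2 : ({t : ℤ | i₁ < t ∧ ω t ≠ G.pt} \ {t₀}).ncard + 1 =
            {t : ℤ | i₁ < t ∧ ω t ≠ G.pt}.ncard :=
          Set.ncard_diff_singleton_add_one ⟨ht0, hω0⟩ hfin
        omega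
      refine (step_reachable hω hω₁ hpw).trans
        (ih ω₁ τ hω₁ hτ (fun t ht => (hτ1 t ht).trans (hlow t ht).symm) hτ2 hcard H2' H3' ?_)
      rw [hlow i₁ le_rfl]
      exact H4
    · refine reach_of_tail_const hω hτ hτ1 hτ2 (fun t ht => ?_)
      by_contra h
      exact hne ⟨t, ht, h⟩

/-- Main induction: contract subloops one at a time from the right. -/
lemma outer_contract (G : PtdGraph) (l : ℕ) :
    ∀ m : ℕ, ∀ ω : ℤ → G.V, ∀ (hω : IsLoopOfLen G l ω), SubloopsShort G l ω →
      {t : ℤ | ω t ≠ G.pt}.ncard ≤ m →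
      (LoopGraph G).G.Reachable ⟨ω, l, hω⟩ (LoopGraph G).pt := by
  intro m
  induction m with
  | zero =>
    intro ω hω hsub hm
    have hfin : {t : ℤ | ω t ≠ G.pt}.Finite := support_finite hω
    have hempty : {t : ℤ | ω t ≠ G.pt} = ∅ := by
      rw [← Set.ncard_eq_zero hfin]
      omega
    rw [show (⟨ω, l, hω⟩ : (LoopGraph G).V) = (LoopGraph G).pt from
      Subtype.ext (funext fun t => by
        by_contra h
        exact absurd (show t ∈ (∅ : Set ℤ) by rw [← hempty]; exact h) (Set.notMem_empty t))]
  | succ m ih =>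
    intro ω hω hsub hm
    by_cases hne : {t : ℤ | ω t ≠ G.pt}.Nonempty
    · obtain ⟨t₁, hω1, hmax⟩ := Int.exists_greatest_of_bdd
        (P := fun t => ω t ≠ G.pt)
        ⟨l, fun z hz => by
          by_contra h
          exact hz (loop_pt_right hω z (by omega))⟩
        hne
      have hfw : ∀ t : ℤ, t₁ < t → ω t = G.pt := by
        intro t ht
        by_contra h
        have := hmax t h
        omega
      have h0t : 0 < t₁ := by
        by_contra h
        exact hω1 (hω.1.2.1 t₁ (by omega))
      have htl : t₁ < (l : ℤ) := by
        by_contra h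
        exact hω1 (loop_pt_right hω t₁ (by omega))
      -- find i₁: greatest base-point position below t₁
      obtain ⟨i₁, ⟨hi₁0, hi₁lt, hi₁pt⟩, hi₁max⟩ := Int.exists_greatest_of_bdd
        (P := fun t => 0 ≤ t ∧ t < t₁ + 1 ∧ ω t = G.pt)
        ⟨t₁ + 1, fun z hz => by omega⟩
        ⟨0, le_rfl, by omega, hω.1.2.1 0 le_rfl⟩
      have hi₁t₁ : i₁ < t₁ := lt_of_le_of_ne (by omega) (fun h => hω1 (h ▸ hi₁pt))
      have hint : ∀ t : ℤ, i₁ < t → t < t₁ + 1 → ω t ≠ G.pt := by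
        intro t h1 h2 h
        have := hi₁max t ⟨by omega, h2, h⟩
        omega
      have hS4 : (ω '' Set.Icc i₁ (t₁ + 1)).ncard ≤ 4 :=
        hsub i₁ (t₁ + 1) hi₁0 (by omega) (by omega) hi₁pt (hfw (t₁ + 1) (by omega)) hint
      have hSfin : (ω '' Set.Icc i₁ (t₁ + 1)).Finite := (Set.finite_Icc _ _).image ω
      have hptS : G.pt ∈ ω '' Set.Icc i₁ (t₁ + 1) :=
        ⟨i₁, Set.mem_Icc.mpr ⟨le_rfl, by omega⟩, hi₁pt⟩
      have hτ : IsLoopOfLen G l (fun t => if i₁ < t then G.pt else ω t) := by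
        refine mkLoop (fun t => ?_) (fun t ht => ?_) (fun t ht => ?_)
        · by_cases h : i₁ < t
          · simp only [if_pos h, if_pos (show i₁ < t + 1 by omega)]
            exact Or.inl trivial
          · by_cases h' : i₁ < t + 1
            · simp only [if_neg h, if_pos h']
              exact Or.inl (by rw [show t = i₁ by omega]; exact hi₁pt)
            · simp only [if_neg h, if_neg h']
              exact loop_gm hω t
        · by_cases h : i₁ < t
          · simp only [if_pos h]
          · simp only [if_neg h]
            exact hω.1.2.1 t ht
        · by_cases h : i₁ < t
          · simp only [if_pos h]
          · simp only [if_neg h]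
            exact loop_pt_right hω t ht
      have hreach1 : (LoopGraph G).G.Reachable ⟨ω, l, hω⟩
          ⟨fun t => if i₁ < t then G.pt else ω t, l, hτ⟩ := by
        refine inner_contract G l (ω '' Set.Icc i₁ (t₁ + 1)) hSfin hS4 hptS i₁ (t₁ + 1) hi₁0
          {t : ℤ | i₁ < t ∧ ω t ≠ G.pt}.ncard ω _ hω hτ
          (fun t ht => by simp only [if_neg (show ¬ i₁ < t by omega)])
          (fun t ht => by simp only [if_pos ht])
          le_rfl (fun t ht => hfw t (by omega))
          (fun t h1 h2 => ⟨t, Set.mem_Icc.mpr ⟨h1, h2⟩, rfl⟩) hi₁pt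
      set τ : ℤ → G.V := fun t => if i₁ < t then G.pt else ω t with hτdef
      have hτval : ∀ t : ℤ, i₁ ≤ t → τ t = G.pt := by
        intro t ht
        by_cases h : i₁ < t
        · simp only [hτdef, if_pos h]
        · simp only [hτdef, if_neg h]
          rw [show t = i₁ by omega]
          exact hi₁pt
      have hτlow : ∀ t : ℤ, t ≤ i₁ → τ t = ω t := by
        intro t ht
        simp only [hτdef, if_neg (show ¬ i₁ < t by omega)]
      have hsubτ : SubloopsShort G l τ := by
        intro j₁ j₂ hj0 hjlt hjl hp1 hp2 hintj
        by_cases hcase : j₂ ≤ i₁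
        · have himg : τ '' Set.Icc j₁ j₂ = ω '' Set.Icc j₁ j₂ := by
            apply Set.image_congr
            intro t ht
            exact hτlow t (le_trans (Set.mem_Icc.mp ht).2 hcase)
          rw [himg]
          refine hsub j₁ j₂ hj0 hjlt hjl ?_ ?_ ?_
          · rw [← hτlow j₁ (by omega)]; exact hp1
          · rw [← hτlow j₂ hcase]; exact hp2
          · intro t h1 h2
            rw [← hτlow t (by omega)]
            exact hintj t h1 h2
        · push_neg at hcase
          have hj1 : i₁ ≤ j₁ := by
            by_contra h
            push_neg at h
            exact hintj i₁ h hcase (hτval i₁ le_rfl)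
          have himg : τ '' Set.Icc j₁ j₂ ⊆ {G.pt} := by
            rintro y ⟨t, ht, rfl⟩
            obtain ⟨h1, h2⟩ := Set.mem_Icc.mp ht
            exact hτval t (le_trans hj1 h1)
          calc (τ '' Set.Icc j₁ j₂).ncard ≤ ({G.pt} : Set G.V).ncard :=
                Set.ncard_le_ncard himg (Set.finite_singleton _)
            _ ≤ 4 := by rw [Set.ncard_singleton]; omega
      have hcardτ : {t : ℤ | τ t ≠ G.pt}.ncard ≤ m := by
        have hfin : {t : ℤ | ω t ≠ G.pt}.Finite := support_finite hω
        have hsubset : {t : ℤ | τ t ≠ G.pt} ⊆ {t : ℤ | ω t ≠ G.pt} \ {t₁} := by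
          intro t ht
          simp only [Set.mem_setOf_eq] at ht
          have htle : t ≤ i₁ := by
            by_contra h
            push_neg at h
            exact ht (hτval t (by omega))
          refine ⟨by simp only [Set.mem_setOf_eq]; rwa [← hτlow t htle], by simp only [Set.mem_singleton_iff]; omega⟩
        have h1 : {t : ℤ | τ t ≠ G.pt}.ncard ≤ ({t : ℤ | ω t ≠ G.pt} \ {t₁}).ncard :=
          Set.ncard_le_ncard hsubset hfin.diff
        have h2 : ({t : ℤ | ω t ≠ G.pt} \ {t₁}).ncard + 1 = {t : ℤ | ω t ≠ G.pt}.ncard :=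
          Set.ncard_diff_singleton_add_one hω1 hfin
        omega
      exact hreach1.trans (ih τ hτ hsubτ hcardτ)
    · have hempty : ∀ t : ℤ, ω t = G.pt := by
        intro t
        by_contra h
        exact hne ⟨t, h⟩
      rw [show (⟨ω, l, hω⟩ : (LoopGraph G).V) = (LoopGraph G).pt from
        Subtype.ext (funext fun t => hempty t)]

end ShortLoopProof2

/-- a loop all of whose subloops have sublength at most 4 is
null-A-homotopic: it lies in the connected component of the constant loop in `ΩG`. -/
theorem short_loop_nullhomotopic (G : PtdGraph) (l : ℕ) (ω : ℤ → G.V)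
    (hω : IsLoopOfLen G l ω) (hsub : SubloopsShort G l ω) :
    (LoopGraph G).G.Reachable (⟨ω, l, hω⟩ : (LoopGraph G).V) (LoopGraph G).pt :=
  outer_contract G l {t : ℤ | ω t ≠ G.pt}.ncard ω hω hsub le_rfl
end

section
/- Let f₁ : (G, u₀) → (H, v₀) be a pointed graph map. Suppose that every loop in ΩG and every loop in ΩH has all of its subloops of sublength ≤ 4. Then the pointed graph maps j ∘ Ωf₁ and f₄ ∘ j' from ΩG to Mf₂ are pointed A-homotopic, where j(ω) = (u₀, ω, β₀) for ω ∈ ΩH, j'(β) = (u₀, ω₀, β, γ₀) for β ∈ ΩG (with ω₀, β₀, γ₀ the constant paths), and f₄ : Mf₃ → Mf₂ is the projection (u, ω, β, γ) ↦ (u, ω, β). -/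
open SimpleGraph

/-! ### Auxiliary development -/

section WalkAux

variable {V : Type} {Gr : SimpleGraph V}

lemma walk_getVert_mem_support {u v : V} (w : Gr.Walk u v) (i : ℕ) :
    w.getVert i ∈ w.support := by
  induction w generalizing i with
  | nil => simp [SimpleGraph.Walk.getVert]
  | cons h q ih =>
    cases i with
    | zero => simp
    | succ i => simp only [SimpleGraph.Walk.support_cons, List.mem_cons]; right; exact ih i

lemma path_getVert_inj {u v : V} {w : Gr.Walk u v} (hw : w.IsPath) :
    ∀ {i j : ℕ}, i ≤ w.length → j ≤ w.length → w.getVert i = w.getVert j → i = j := by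
  induction w with
  | nil => intro i j hi hj _; simp only [SimpleGraph.Walk.length_nil] at hi hj; omega
  | cons h q ih =>
    rw [SimpleGraph.Walk.cons_isPath_iff] at hw
    intro i j hi hj hij
    simp only [SimpleGraph.Walk.length_cons] at hi hj
    match i, j with
    | 0, 0 => rfl
    | 0, j+1 =>
      rw [SimpleGraph.Walk.getVert_zero, SimpleGraph.Walk.getVert_cons_succ] at hij
      exact absurd (hij ▸ walk_getVert_mem_support q j) hw.2
    | i+1, 0 =>
      rw [SimpleGraph.Walk.getVert_zero, SimpleGraph.Walk.getVert_cons_succ] at hij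
      exact absurd (hij ▸ walk_getVert_mem_support q i) hw.2
    | i+1, j+1 =>
      rw [SimpleGraph.Walk.getVert_cons_succ, SimpleGraph.Walk.getVert_cons_succ] at hij
      exact congrArg Nat.succ (ih hw.1 (by omega) (by omega) hij)

lemma walk_to_getVert {u v : V} (w : Gr.Walk u v) (i : ℕ) :
    ∃ w' : Gr.Walk u (w.getVert i), w'.length ≤ i := by
  induction w generalizing i with
  | nil => exact ⟨SimpleGraph.Walk.nil.copy rfl (by simp [SimpleGraph.Walk.getVert]), by simp⟩
  | cons h q ih =>
    cases i with
    | zero => exact ⟨SimpleGraph.Walk.nil.copy rfl (by simp), by simp⟩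
    | succ i =>
      obtain ⟨w', hw'⟩ := ih i
      exact ⟨(SimpleGraph.Walk.cons h w').copy rfl (by simp), by simpa using hw'⟩

end WalkAux

section PathZAux

lemma pathZ_adj_succ (t : ℤ) : pathZ.Adj t (t + 1) :=
  (SimpleGraph.fromRel_adj _ _ _).mpr ⟨by omega, Or.inl rfl⟩

lemma isGraphMap_pathZ_of_step {G : PtdGraph} {a : ℤ → G.V}
    (h : ∀ t : ℤ, a t = a (t + 1) ∨ G.G.Adj (a t) (a (t + 1))) :
    IsGraphMap pathZ G.G a := by
  intro s t hst
  obtain ⟨hne, hrel⟩ := (SimpleGraph.fromRel_adj _ _ _).mp hst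
  rcases hrel with h1 | h1
  · subst h1; exact h s
  · subst h1; exact (h t).imp Eq.symm SimpleGraph.Adj.symm

lemma step_of_isGraphMap {G : PtdGraph} {a : ℤ → G.V}
    (h : IsGraphMap pathZ G.G a) (t : ℤ) :
    a t = a (t + 1) ∨ G.G.Adj (a t) (a (t + 1)) :=
  h (pathZ_adj_succ t)

/-- Pointwise closeness of two maps `ℤ → G.V`. -/
def Ptw (G : PtdGraph) (a b : ℤ → G.V) : Prop :=
  ∀ t : ℤ, a t = b t ∨ G.G.Adj (a t) (b t)

lemma Ptw.symm {G : PtdGraph} {a b : ℤ → G.V} (h : Ptw G a b) : Ptw G b a :=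
  fun t => (h t).imp Eq.symm SimpleGraph.Adj.symm

lemma ptw_of_pathRel {G : PtdGraph} {a b : ℤ → G.V} (h : pathRel G a b) : Ptw G a b := by
  obtain ⟨F, hF, h0, h1⟩ := h
  intro t
  have h01 : (pathI 1).Adj 0 1 := by
    rw [pathI, SimpleGraph.fromRel_adj]
    exact ⟨by decide, Or.inl (by decide)⟩
  have hadj : (pathZ □ pathI 1).Adj (t, 0) (t, 1) := by
    rw [SimpleGraph.boxProd_adj]
    exact Or.inr ⟨h01, rfl⟩
  have := hF hadj
  rwa [h0, h1] at this

lemma pathRel_of_ptw {G : PtdGraph} {a b : ℤ → G.V}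
    (ha : IsGraphMap pathZ G.G a) (hb : IsGraphMap pathZ G.G b)
    (h : Ptw G a b) : pathRel G a b := by
  refine ⟨fun p => if p.2 = 0 then a p.1 else b p.1, ?_, fun t => by simp, fun t => by simp⟩
  rintro ⟨s, i⟩ ⟨t, j⟩ hpq
  dsimp only
  rcases hpq with ⟨hz, (he : i = j)⟩ | ⟨hj, (he : s = t)⟩
  · subst he
    by_cases h0 : i = 0
    · simp only [h0, if_pos rfl]; exact ha hz
    · simp only [if_neg h0]; exact hb hz
  · subst he
    obtain ⟨hne, hr⟩ := (SimpleGraph.fromRel_adj _ _ _).mp hj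
    have hne' : i ≠ j := hne
    have hr' : (j : ℕ) = (i : ℕ) + 1 ∨ (i : ℕ) = (j : ℕ) + 1 := hr
    clear hne hr hj
    have hc : (i = 0 ∧ j = 1) ∨ (i = 1 ∧ j = 0) := by
      revert hne' hr'; revert i j; decide
    rcases hc with ⟨hi, hjj⟩ | ⟨hi, hjj⟩ <;> subst hi <;> subst hjj
    · simp only [if_pos rfl, if_neg (by decide : (1 : Fin 2) ≠ 0)]
      exact h s
    · simp only [if_pos rfl, if_neg (by decide : (1 : Fin 2) ≠ 0)]
      exact (h s).imp Eq.symm SimpleGraph.Adj.symm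

end PathZAux


section ReachAux

open Classical in
/-- Reachability from the base vertex. -/
def Rch (G : PtdGraph) (v : G.V) : Prop := G.G.Reachable G.pt v

lemma rch_pt (G : PtdGraph) : Rch G G.pt := SimpleGraph.Reachable.refl _

lemma loopOfLen_rch {G : PtdGraph} {l : ℕ} {β : ℤ → G.V} (h : IsLoopOfLen G l β) (t : ℤ) :
    Rch G (β t) := by
  obtain ⟨⟨hgm, h0, -⟩, -⟩ := h
  have aux : ∀ n : ℕ, Rch G (β n) := by
    intro n
    induction n with
    | zero =>
      have : β (0 : ℤ) = G.pt := h0 0 le_rfl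
      rw [show ((0:ℕ):ℤ) = (0:ℤ) from rfl, this]; exact rch_pt G
    | succ n ih =>
      have hs := step_of_isGraphMap hgm (n : ℤ)
      have hcast : ((n : ℤ) + 1) = ((n + 1 : ℕ) : ℤ) := by push_cast; ring
      rw [hcast] at hs
      rcases hs with he | ha
      · rwa [← he]
      · exact ih.trans ha.reachable
  rcases le_or_gt t 0 with ht | ht
  · rw [h0 t ht]; exact rch_pt G
  · have : ((t.toNat : ℕ) : ℤ) = t := Int.toNat_of_nonneg ht.le
    rw [← this]; exact aux t.toNat

lemma loop_rch {G : PtdGraph} {β : ℤ → G.V} (h : IsLoop G β) (t : ℤ) : Rch G (β t) := by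
  obtain ⟨l, hl⟩ := h; exact loopOfLen_rch hl t

open Classical in
/-- A chosen shortest path from the basepoint to a reachable vertex. -/
noncomputable def spw {G : PtdGraph} (v : G.V) (h : Rch G v) : G.G.Walk G.pt v :=
  (Classical.choose h.exists_walk_length_eq_dist).bypass

lemma spw_isPath {G : PtdGraph} (v : G.V) (h : Rch G v) : (spw v h).IsPath := by
  classical exact SimpleGraph.Walk.bypass_isPath _

lemma spw_length {G : PtdGraph} (v : G.V) (h : Rch G v) :
    (spw v h).length = G.G.dist G.pt v := by
  classical
  refine le_antisymm ?_ (SimpleGraph.dist_le _)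
  calc (spw v h).length ≤ (Classical.choose h.exists_walk_length_eq_dist).length :=
        SimpleGraph.Walk.length_bypass_le _
    _ = G.G.dist G.pt v := Classical.choose_spec h.exists_walk_length_eq_dist

lemma rch_eq_pt_of_dist_zero {G : PtdGraph} {v : G.V} (h : Rch G v)
    (hd : G.G.dist G.pt v = 0) : v = G.pt := by
  have := spw_length v h
  rw [hd] at this
  exact (SimpleGraph.Walk.eq_of_length_eq_zero this).symm

lemma dist_pos_of_ne {G : PtdGraph} {v : G.V} (h : Rch G v) (hne : v ≠ G.pt) :
    1 ≤ G.G.dist G.pt v := by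
  rcases Nat.eq_zero_or_pos (G.G.dist G.pt v) with h0 | h1
  · exact absurd (rch_eq_pt_of_dist_zero h h0) hne
  · exact h1

open Classical in
/-- The "parent" of a vertex: one step closer to the basepoint along a chosen
shortest path. -/
noncomputable def par (G : PtdGraph) (v : G.V) : G.V :=
  if h : Rch G v ∧ v ≠ G.pt then (spw v h.1).getVert (G.G.dist G.pt v - 1) else G.pt

lemma par_pt (G : PtdGraph) : par G G.pt = G.pt :=
  dif_neg (by simp)

lemma par_eq {G : PtdGraph} {v : G.V} (h : Rch G v) (hne : v ≠ G.pt) :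
    par G v = (spw v h).getVert (G.G.dist G.pt v - 1) :=
  dif_pos ⟨h, hne⟩

lemma par_adj {G : PtdGraph} {v : G.V} (h : Rch G v) (hne : v ≠ G.pt) :
    G.G.Adj (par G v) v := by
  rw [par_eq h hne]
  have h1 := dist_pos_of_ne h hne
  have hlt : G.G.dist G.pt v - 1 < (spw v h).length := by rw [spw_length]; omega
  have := (spw v h).adj_getVert_succ hlt
  have he : G.G.dist G.pt v - 1 + 1 = (spw v h).length := by rw [spw_length]; omega
  rw [he, SimpleGraph.Walk.getVert_length] at this
  exact this

lemma par_dist {G : PtdGraph} {v : G.V} (h : Rch G v) (hne : v ≠ G.pt) :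
    G.G.dist G.pt (par G v) = G.G.dist G.pt v - 1 := by
  have h1 := dist_pos_of_ne h hne
  refine le_antisymm ?_ ?_
  · rw [par_eq h hne]
    obtain ⟨w', hw'⟩ := walk_to_getVert (spw v h) (G.G.dist G.pt v - 1)
    exact (SimpleGraph.dist_le w').trans hw'
  · by_contra hlt
    push_neg at hlt
    have hr : Rch G (par G v) := h.trans (par_adj h hne).symm.reachable
    have := SimpleGraph.dist_le ((spw (par G v) hr).concat (par_adj h hne))
    rw [SimpleGraph.Walk.length_concat, spw_length] at this
    omega

lemma par_rch {G : PtdGraph} {v : G.V} (h : Rch G v) : Rch G (par G v) := by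
  by_cases hne : v = G.pt
  · subst hne; rw [par_pt]; exact rch_pt G
  · exact h.trans (par_adj h hne).symm.reachable

lemma par_step {G : PtdGraph} {v : G.V} (h : Rch G v) :
    v = par G v ∨ G.G.Adj v (par G v) := by
  by_cases hne : v = G.pt
  · subst hne; rw [par_pt]; exact Or.inl rfl
  · exact Or.inr (par_adj h hne).symm

lemma dist_adj_le {G : PtdGraph} {x y : G.V} (hx : Rch G x) (hadj : G.G.Adj x y) :
    G.G.dist G.pt y ≤ G.G.dist G.pt x + 1 := by
  have := SimpleGraph.dist_le ((spw x hx).concat hadj)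
  rwa [SimpleGraph.Walk.length_concat, spw_length] at this

lemma adj_pt_of_dist_one {G : PtdGraph} {v : G.V} (h : Rch G v)
    (hd : G.G.dist G.pt v = 1) : G.G.Adj G.pt v := by
  have := spw_length v h
  rw [hd] at this
  exact (spw v h).adj_of_length_eq_one this

end ReachAux

section ExcAux

variable {G : PtdGraph} {x y : G.V}

/-- The loop obtained by going out along `wx`, crossing to `y`, and coming back
along the reverse of `wy`. -/
noncomputable def exc (wx : G.G.Walk G.pt x) (wy : G.G.Walk G.pt y) : ℤ → G.V :=
  fun t => if t ≤ (wx.length : ℤ) then wx.getVert t.toNat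
    else wy.getVert (((wx.length : ℤ) + 1 + (wy.length : ℤ)) - t).toNat

lemma exc_low (wx : G.G.Walk G.pt x) (wy : G.G.Walk G.pt y) {t : ℤ} (ht : t ≤ 0) :
    exc wx wy t = G.pt := by
  rw [exc, if_pos (ht.trans (by positivity)), show t.toNat = 0 by omega,
    SimpleGraph.Walk.getVert_zero]

lemma exc_high (wx : G.G.Walk G.pt x) (wy : G.G.Walk G.pt y) {t : ℤ}
    (ht : ((wx.length + 1 + wy.length : ℕ) : ℤ) ≤ t) : exc wx wy t = G.pt := by
  rw [exc, if_neg (by push_cast at ht ⊢; omega),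
    show (((wx.length : ℤ) + 1 + (wy.length : ℤ)) - t).toNat = 0 by push_cast at ht; omega,
    SimpleGraph.Walk.getVert_zero]

lemma exc_left (wx : G.G.Walk G.pt x) (wy : G.G.Walk G.pt y) {i : ℕ} (hi : i ≤ wx.length) :
    exc wx wy (i : ℤ) = wx.getVert i := by
  rw [exc, if_pos (by exact_mod_cast hi), Int.toNat_natCast]

lemma exc_right (wx : G.G.Walk G.pt x) (wy : G.G.Walk G.pt y) {j : ℕ} (hj : j ≤ wy.length) :
    exc wx wy (((wx.length + 1 + wy.length : ℕ) : ℤ) - j) = wy.getVert j := by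
  rw [exc, if_neg (by push_cast; omega)]
  congr 1
  push_cast
  omega

lemma exc_step (wx : G.G.Walk G.pt x) (wy : G.G.Walk G.pt y)
    (hxy : x = y ∨ G.G.Adj x y) (t : ℤ) :
    exc wx wy t = exc wx wy (t + 1) ∨ G.G.Adj (exc wx wy t) (exc wx wy (t + 1)) := by
  set N : ℕ := wx.length + 1 + wy.length with hN
  by_cases h1 : t < 0
  · left; rw [exc_low wx wy (by omega), exc_low wx wy (by omega : t + 1 ≤ 0)]
  push_neg at h1
  by_cases h2 : t + 1 ≤ (wx.length : ℤ)
  · rw [exc, exc, if_pos (by omega), if_pos h2, show (t+1).toNat = t.toNat + 1 by omega]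
    right
    exact wx.adj_getVert_succ (by omega)
  by_cases h3 : t ≤ (wx.length : ℤ)
  · -- t = wx.length
    have ht : t = (wx.length : ℤ) := by omega
    have e1 : exc wx wy t = x := by
      rw [ht, exc_left wx wy le_rfl, SimpleGraph.Walk.getVert_length]
    have e2 : exc wx wy (t + 1) = y := by
      have harg : t + 1 = ((wx.length + 1 + wy.length : ℕ) : ℤ) - (wy.length : ℤ) := by
        push_cast; omega
      rw [harg, exc_right wx wy (le_rfl : wy.length ≤ wy.length),
        SimpleGraph.Walk.getVert_length]
    rw [e1, e2]
    exact hxy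
  push_neg at h3
  by_cases h4 : ((N : ℕ) : ℤ) ≤ t
  · left; rw [exc_high wx wy h4, exc_high wx wy (by omega)]
  push_neg at h4
  have hNc : ((N : ℕ) : ℤ) = (wx.length : ℤ) + 1 + (wy.length : ℤ) := by push_cast [hN]; ring
  rw [exc, exc, if_neg (by omega), if_neg (by omega)]
  set j : ℕ := (((wx.length : ℤ) + 1 + (wy.length : ℤ)) - (t+1)).toNat with hj
  have hj1 : (((wx.length : ℤ) + 1 + (wy.length : ℤ)) - t).toNat = j + 1 := by
    rw [hj]; omega
  rw [hj1]
  right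
  refine (wy.adj_getVert_succ ?_).symm
  rw [hj]
  omega

lemma exc_loopOfLen (wx : G.G.Walk G.pt x) (wy : G.G.Walk G.pt y)
    (hxy : x = y ∨ G.G.Adj x y) :
    IsLoopOfLen G (wx.length + 1 + wy.length) (exc wx wy) := by
  refine ⟨⟨isGraphMap_pathZ_of_step (exc_step wx wy hxy), fun t ht => exc_low wx wy ht,
    fun t ht => ?_⟩, exc_high wx wy le_rfl⟩
  rw [exc_high wx wy ht, exc_high wx wy le_rfl]

lemma exc_interior (wx : G.G.Walk G.pt x) (wy : G.G.Walk G.pt y)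
    (hpx : wx.IsPath) (hpy : wy.IsPath) {t : ℤ} (h0 : 0 < t)
    (hN : t < ((wx.length + 1 + wy.length : ℕ) : ℤ)) : exc wx wy t ≠ G.pt := by
  push_cast at hN
  by_cases h3 : t ≤ (wx.length : ℤ)
  · rw [exc, if_pos h3]
    intro hc
    have := path_getVert_inj hpx (by omega) (Nat.zero_le _)
      (hc.trans (SimpleGraph.Walk.getVert_zero wx).symm)
    omega
  · rw [exc, if_neg h3]
    intro hc
    have := path_getVert_inj hpy (by omega) (Nat.zero_le _)
      (hc.trans (SimpleGraph.Walk.getVert_zero wy).symm)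
    omega

lemma exc_card (hG : AllLoopsShort G) (wx : G.G.Walk G.pt x) (wy : G.G.Walk G.pt y)
    (hpx : wx.IsPath) (hpy : wy.IsPath) (hxy : x = y ∨ G.G.Adj x y) :
    ∃ S : Set G.V, S.Finite ∧ (∀ i ≤ wx.length, wx.getVert i ∈ S) ∧
      (∀ j ≤ wy.length, wy.getVert j ∈ S) ∧ S.ncard ≤ 4 := by
  set N : ℕ := wx.length + 1 + wy.length with hN
  refine ⟨exc wx wy '' Set.Icc 0 (N : ℤ), (Set.finite_Icc _ _).image _, ?_, ?_, ?_⟩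
  · intro i hi
    exact ⟨(i : ℤ), ⟨by positivity, by push_cast [hN]; omega⟩, exc_left wx wy hi⟩
  · intro j hj
    exact ⟨((N : ℕ) : ℤ) - j, ⟨by push_cast [hN]; omega, by push_cast [hN]; omega⟩,
      exc_right wx wy hj⟩
  · exact hG N (exc wx wy) (exc_loopOfLen wx wy hxy) 0 (N : ℤ) le_rfl
      (by push_cast [hN]; omega) le_rfl (exc_low wx wy le_rfl) (exc_high wx wy le_rfl)
      (fun t ht1 ht2 => exc_interior wx wy hpx hpy ht1 ht2)

end ExcAux


section ParAux

variable {G : PtdGraph}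

lemma dist_le_three (hG : AllLoopsShort G) {v : G.V} (h : Rch G v) :
    G.G.dist G.pt v ≤ 3 := by
  by_cases hne : v = G.pt
  · subst hne; simp [SimpleGraph.dist_self]
  obtain ⟨S, hSfin, hmem, -, hcard⟩ :=
    exc_card hG (spw v h) (spw v h) (spw_isPath v h) (spw_isPath v h) (Or.inl rfl)
  set w := spw v h with hw
  have hsub : (fun i : ℕ => w.getVert i) '' Set.Iic w.length ⊆ S := by
    rintro - ⟨i, hi, rfl⟩
    exact hmem i hi
  have hinj : Set.InjOn (fun i : ℕ => w.getVert i) (Set.Iic w.length) :=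
    fun i hi j hj hij => path_getVert_inj (spw_isPath v h) hi hj hij
  have hval : ((fun i : ℕ => w.getVert i) '' Set.Iic w.length).ncard = w.length + 1 := by
    rw [Set.ncard_image_of_injOn hinj, ← Finset.coe_Iic, Set.ncard_coe_finset, Nat.card_Iic]
  have := (Set.ncard_le_ncard hsub hSfin)
  rw [hval] at this
  rw [← spw_length v h, ← hw]
  omega

lemma par_adj_par (hG : AllLoopsShort G) {x y : G.V} (hx : Rch G x) (hy : Rch G y)
    (hadj : G.G.Adj x y) : par G x = par G y ∨ G.G.Adj (par G x) (par G y) := by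
  by_cases hxp : x = G.pt
  · subst hxp
    have hyp : y ≠ G.pt := fun hc => G.G.irrefl (hc ▸ hadj)
    have hdy : G.G.dist G.pt y ≤ 1 := by
      have := dist_adj_le (rch_pt G) hadj
      rwa [SimpleGraph.dist_self, zero_add] at this
    have hdy1 : G.G.dist G.pt y = 1 := le_antisymm hdy (dist_pos_of_ne hy hyp)
    have hpy : par G y = G.pt := by
      refine rch_eq_pt_of_dist_zero (par_rch hy) ?_
      rw [par_dist hy hyp, hdy1]
    rw [par_pt, hpy]
    exact Or.inl rfl
  by_cases hyp : y = G.pt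
  · subst hyp
    have hdx : G.G.dist G.pt x ≤ 1 := by
      have := dist_adj_le (rch_pt G) hadj.symm
      rwa [SimpleGraph.dist_self, zero_add] at this
    have hdx1 : G.G.dist G.pt x = 1 := le_antisymm hdx (dist_pos_of_ne hx hxp)
    have hpx : par G x = G.pt := by
      refine rch_eq_pt_of_dist_zero (par_rch hx) ?_
      rw [par_dist hx hxp, hdx1]
    rw [par_pt, hpx]
    exact Or.inl rfl
  have hdx := par_dist hx hxp
  have hdy := par_dist hy hyp
  have hax := par_adj hx hxp
  have hay := par_adj hy hyp
  have hrx := par_rch hx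
  have hry := par_rch hy
  have hx1 := dist_pos_of_ne hx hxp
  have hy1 := dist_pos_of_ne hy hyp
  by_cases hpp : par G x = par G y
  · exact Or.inl hpp
  by_cases hpxp : par G x = G.pt
  · by_cases hpyp : par G y = G.pt
    · exact Or.inl (hpxp.trans hpyp.symm)
    have hdx1 : G.G.dist G.pt x = 1 := by
      have h0 : G.G.dist G.pt (par G x) = 0 := by rw [hpxp, SimpleGraph.dist_self]
      omega
    have hdyle : G.G.dist G.pt y ≤ 2 := by
      have := dist_adj_le hx hadj
      omega
    have hdpy1 : G.G.dist G.pt (par G y) = 1 := by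
      have := dist_pos_of_ne hry hpyp
      omega
    right
    rw [hpxp]
    exact adj_pt_of_dist_one hry hdpy1
  by_cases hpyp : par G y = G.pt
  · have hdy1 : G.G.dist G.pt y = 1 := by
      have h0 : G.G.dist G.pt (par G y) = 0 := by rw [hpyp, SimpleGraph.dist_self]
      omega
    have hdxle : G.G.dist G.pt x ≤ 2 := by
      have := dist_adj_le hy hadj.symm
      omega
    have hdpx1 : G.G.dist G.pt (par G x) = 1 := by
      have := dist_pos_of_ne hrx hpxp
      omega
    right
    rw [hpyp]
    exact (adj_pt_of_dist_one hrx hdpx1).symm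
  by_cases hpxy : par G x = y
  · right; rw [hpxy]; exact hay.symm
  by_cases hpyx : par G y = x
  · right; rw [hpyx]; exact hax
  -- now derive a contradiction: five distinct vertices in a short subloop
  exfalso
  obtain ⟨S, hSfin, hmemx, hmemy, hcard⟩ :=
    exc_card hG (spw x hx) (spw y hy) (spw_isPath x hx) (spw_isPath y hy) (Or.inr hadj)
  have hptS : G.pt ∈ S := by
    have := hmemx 0 (Nat.zero_le _)
    rwa [SimpleGraph.Walk.getVert_zero] at this
  have hxS : x ∈ S := by
    have := hmemx (spw x hx).length le_rfl
    rwa [SimpleGraph.Walk.getVert_length] at this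
  have hyS : y ∈ S := by
    have := hmemy (spw y hy).length le_rfl
    rwa [SimpleGraph.Walk.getVert_length] at this
  have hpxS : par G x ∈ S := by
    rw [par_eq hx hxp]
    refine hmemx _ ?_
    rw [spw_length]
    omega
  have hpyS : par G y ∈ S := by
    rw [par_eq hy hyp]
    refine hmemy _ ?_
    rw [spw_length]
    omega
  have hsub : ({G.pt, x, y, par G x, par G y} : Set G.V) ⊆ S := by
    intro v hv
    rcases hv with rfl | rfl | rfl | rfl | rfl
    exacts [hptS, hxS, hyS, hpxS, hpyS]
  have h5 : ({G.pt, x, y, par G x, par G y} : Set G.V).ncard = 5 := by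
    rw [Set.ncard_insert_of_notMem, Set.ncard_insert_of_notMem,
      Set.ncard_insert_of_notMem, Set.ncard_pair hpp]
    · simp only [Set.mem_insert_iff, Set.mem_singleton_iff]
      push_neg
      exact ⟨fun hc => hpxy hc.symm, fun hc => hay.ne hc.symm⟩
    · simp only [Set.mem_insert_iff, Set.mem_singleton_iff]
      push_neg
      exact ⟨hadj.ne, fun hc => hax.ne hc.symm, fun hc => hpyx hc.symm⟩
    · simp only [Set.mem_insert_iff, Set.mem_singleton_iff]
      push_neg
      exact ⟨fun hc => hxp hc.symm, fun hc => hyp hc.symm,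
        fun hc => hpxp hc.symm, fun hc => hpyp hc.symm⟩
  have := Set.ncard_le_ncard hsub hSfin
  omega

lemma par_iter_pt (G : PtdGraph) (k : ℕ) : (par G)^[k] G.pt = G.pt :=
  Function.iterate_fixed (par_pt G) k

lemma par_iter_rch {v : G.V} (h : Rch G v) (k : ℕ) : Rch G ((par G)^[k] v) := by
  induction k with
  | zero => exact h
  | succ k ih => rw [Function.iterate_succ_apply']; exact par_rch ih

lemma par_cube (hG : AllLoopsShort G) {v : G.V} (h : Rch G v) :
    (par G)^[3] v = G.pt := by
  have key : ∀ k : ℕ, ∀ v : G.V, Rch G v → G.G.dist G.pt v ≤ k → (par G)^[k] v = G.pt := by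
    intro k
    induction k with
    | zero =>
      intro v hv hd
      simp only [Function.iterate_zero, id]
      exact rch_eq_pt_of_dist_zero hv (by omega)
    | succ k ih =>
      intro v hv hd
      rw [Function.iterate_succ_apply]
      by_cases hne : v = G.pt
      · subst hne; rw [par_pt]; exact ih _ (rch_pt G) (by simp [SimpleGraph.dist_self])
      · exact ih _ (par_rch hv) (by have := par_dist hv hne; omega)
  exact key 3 v h (dist_le_three hG h)

lemma par_iter_step {v : G.V} (h : Rch G v) (k : ℕ) :
    (par G)^[k] v = (par G)^[k+1] v ∨ G.G.Adj ((par G)^[k] v) ((par G)^[k+1] v) := by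
  rw [Function.iterate_succ_apply']
  exact par_step (par_iter_rch h k)

lemma par_iter_map (hG : AllLoopsShort G) {x y : G.V} (hx : Rch G x) (hy : Rch G y)
    (h : x = y ∨ G.G.Adj x y) (k : ℕ) :
    (par G)^[k] x = (par G)^[k] y ∨ G.G.Adj ((par G)^[k] x) ((par G)^[k] y) := by
  induction k with
  | zero => exact h
  | succ k ih =>
    rw [Function.iterate_succ_apply', Function.iterate_succ_apply']
    rcases ih with he | ha
    · exact Or.inl (congrArg _ he)
    · exact par_adj_par hG (par_iter_rch hx k) (par_iter_rch hy k) ha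

/-- Applying `par` (iterated) pointwise to a loop gives a loop. -/
lemma loop_par_iter (hG : AllLoopsShort G) {β : ℤ → G.V} (h : IsLoop G β) (k : ℕ) :
    IsLoop G (fun s => (par G)^[k] (β s)) := by
  obtain ⟨l, hl⟩ := h
  refine ⟨l, ⟨⟨isGraphMap_pathZ_of_step ?_, ?_, ?_⟩, ?_⟩⟩
  · intro t
    exact par_iter_map hG (loopOfLen_rch hl t) (loopOfLen_rch hl (t+1))
      (step_of_isGraphMap hl.1.1 t) k
  · intro t ht
    exact (congrArg _ (hl.1.2.1 t ht)).trans (par_iter_pt G k)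
  · intro t ht
    exact congrArg _ (hl.1.2.2 t ht)
  · exact (congrArg _ hl.2).trans (par_iter_pt G k)

end ParAux


section Mk2

lemma IsLoop.graphMap {G : PtdGraph} {b : ℤ → G.V} (h : IsLoop G b) :
    IsGraphMap pathZ G.G b := by
  obtain ⟨l, hl⟩ := h; exact hl.1.1

variable (G H : PtdGraph) (f : G.V → H.V) (hf : f G.pt = H.pt)

/-- A vertex of `Mf₂` of the form `((u₀, ω), b)` with `ω` a loop in `H` and `b` a loop
in `G`. -/
def mk2 (ω : ℤ → H.V) (hω : IsLoop H ω) (b : ℤ → G.V) (hb : IsLoop G b) :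
    (Mf2 G H f hf).V :=
  ⟨(⟨(G.pt, ω), hω.imp (fun _ hl => ⟨hl.1, hl.2.trans hf.symm⟩)⟩, b),
    hb.imp (fun _ hl => ⟨hl.1, hl.2⟩)⟩

lemma mk2_adj {ω ω' : ℤ → H.V} {hω : IsLoop H ω} {hω' : IsLoop H ω'}
    {b b' : ℤ → G.V} {hb : IsLoop G b} {hb' : IsLoop G b'}
    (h : (ω = ω' ∧ Ptw G b b') ∨ (b = b' ∧ Ptw H ω ω')) :
    mk2 G H f hf ω hω b hb = mk2 G H f hf ω' hω' b' hb' ∨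
      (Mf2 G H f hf).G.Adj (mk2 G H f hf ω hω b hb) (mk2 G H f hf ω' hω' b' hb') := by
  rcases h with ⟨h1, h2⟩ | ⟨h1, h2⟩
  · by_cases hbe : b = b'
    · left; subst h1; subst hbe; rfl
    · right
      refine (SimpleGraph.fromRel_adj _ _ _).mpr ⟨?_, Or.inl (Or.inl ⟨?_, ?_⟩)⟩
      · intro hc
        exact hbe (congrArg (fun z : (Mf2 G H f hf).V => z.1.2) hc)
      · exact Subtype.ext (congrArg (Prod.mk G.pt) h1)
      · exact pathRel_of_ptw hb.graphMap hb'.graphMap h2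
  · by_cases hωe : ω = ω'
    · left; subst h1; subst hωe; rfl
    · right
      refine (SimpleGraph.fromRel_adj _ _ _).mpr ⟨?_, Or.inl (Or.inr ⟨?_, h1⟩)⟩
      · intro hc
        exact hωe (congrArg (fun z : (Mf2 G H f hf).V => z.1.1.1.2) hc)
      · refine (SimpleGraph.fromRel_adj _ _ _).mpr ⟨?_, Or.inl (Or.inl ⟨rfl, ?_⟩)⟩
        · intro hc
          exact hωe (congrArg (fun z : (Mf1 G H f hf).V => z.1.2) hc)
        · exact pathRel_of_ptw hω.graphMap hω'.graphMap h2

end Mk2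

/-- if every loop of `G` and of `H` has all subloops of sublength ≤ 4,
then `j ∘ Ωf₁` and `f₄ ∘ j'` are pointed A-homotopic maps `ΩG → Mf₂`. -/
theorem jOmega_homotopic_f4j' (G H : PtdGraph) (f : G.V → H.V)
    (hmap : IsGraphMap G.G H.G f) (hf : f G.pt = H.pt)
    (hG : AllLoopsShort G) (hH : AllLoopsShort H) :
    PtdHomotopic (LoopGraph G) (Mf2 G H f hf)
      (fun β => jmap G H f hf (OmegaMap G H f hmap hf β))
      (fun β => f4 G H f hf (j'map G H f hf β)) := by
  classical
  refine ⟨6, fun p => mk2 G H f hf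
      (fun s => (par H)^[min (p.2 : ℕ) 3] (f (p.1.1 s)))
      (loop_par_iter hH (loopComp f hmap hf p.1.2) _)
      (fun s => (par G)^[6 - max (p.2 : ℕ) 3] (p.1.1 s))
      (loop_par_iter hG p.1.2 _), ?_, ?_, ?_, ?_⟩
  · -- the homotopy is a graph map
    rintro ⟨β, t⟩ ⟨β', t'⟩ hpq
    have hrβ : ∀ s, Rch G (β.1 s) := loop_rch β.2
    have hrβ' : ∀ s, Rch G (β'.1 s) := loop_rch β'.2
    have hrfβ : ∀ s, Rch H (f (β.1 s)) := loop_rch (loopComp f hmap hf β.2)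
    have hrfβ' : ∀ s, Rch H (f (β'.1 s)) := loop_rch (loopComp f hmap hf β'.2)
    rcases hpq with ⟨hadj, (he : t = t')⟩ | ⟨(hadj : (pathI 6).Adj t t'), (he : β = β')⟩
    · -- loops adjacent, same time
      subst he
      obtain ⟨hne, hrel⟩ := (SimpleGraph.fromRel_adj _ _ _).mp hadj
      have hptw : Ptw G β.1 β'.1 := by
        rcases hrel with h | h
        · exact ptw_of_pathRel h
        · exact (ptw_of_pathRel h).symm
      have hptwf : ∀ s, f (β.1 s) = f (β'.1 s) ∨ H.G.Adj (f (β.1 s)) (f (β'.1 s)) :=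
        fun s => (hptw s).elim (fun e => Or.inl (congrArg f e)) (fun a => hmap a)
      by_cases ht : (t : ℕ) ≤ 3
      · refine mk2_adj G H f hf (Or.inr ⟨?_, ?_⟩)
        · funext s
          have e3 : 6 - max (t : ℕ) 3 = 3 := by omega
          rw [e3]
          exact (par_cube hG (hrβ s)).trans (par_cube hG (hrβ' s)).symm
        · intro s
          exact par_iter_map hH (hrfβ s) (hrfβ' s) (hptwf s) _
      · refine mk2_adj G H f hf (Or.inl ⟨?_, ?_⟩)
        · funext s
          have e3 : min (t : ℕ) 3 = 3 := by omega
          rw [e3]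
          exact (par_cube hH (hrfβ s)).trans (par_cube hH (hrfβ' s)).symm
        · intro s
          exact par_iter_map hG (hrβ s) (hrβ' s) (hptw s) _
    · -- same loop, adjacent times
      subst he
      obtain ⟨hne, hrel⟩ := (SimpleGraph.fromRel_adj _ _ _).mp hadj
      have key : ∀ a b : Fin 7, (b : ℕ) = (a : ℕ) + 1 →
          mk2 G H f hf (fun s => (par H)^[min ((a : Fin 7) : ℕ) 3] (f (β.1 s)))
            (loop_par_iter hH (loopComp f hmap hf β.2) _)
            (fun s => (par G)^[6 - max ((a : Fin 7) : ℕ) 3] (β.1 s))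
            (loop_par_iter hG β.2 _) =
          mk2 G H f hf (fun s => (par H)^[min ((b : Fin 7) : ℕ) 3] (f (β.1 s)))
            (loop_par_iter hH (loopComp f hmap hf β.2) _)
            (fun s => (par G)^[6 - max ((b : Fin 7) : ℕ) 3] (β.1 s))
            (loop_par_iter hG β.2 _) ∨
          (Mf2 G H f hf).G.Adj
            (mk2 G H f hf (fun s => (par H)^[min ((a : Fin 7) : ℕ) 3] (f (β.1 s)))
              (loop_par_iter hH (loopComp f hmap hf β.2) _)
              (fun s => (par G)^[6 - max ((a : Fin 7) : ℕ) 3] (β.1 s))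
              (loop_par_iter hG β.2 _))
            (mk2 G H f hf (fun s => (par H)^[min ((b : Fin 7) : ℕ) 3] (f (β.1 s)))
              (loop_par_iter hH (loopComp f hmap hf β.2) _)
              (fun s => (par G)^[6 - max ((b : Fin 7) : ℕ) 3] (β.1 s))
              (loop_par_iter hG β.2 _)) := by
        intro a b hab
        by_cases hk : (a : ℕ) ≤ 2
        · refine mk2_adj G H f hf (Or.inr ⟨?_, ?_⟩)
          · have e1 : 6 - max ((a : Fin 7) : ℕ) 3 = 6 - max ((b : Fin 7) : ℕ) 3 := by omega
            rw [e1]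
          · intro s
            have e2 : min ((b : Fin 7) : ℕ) 3 = min ((a : Fin 7) : ℕ) 3 + 1 := by omega
            rw [e2]
            exact par_iter_step (hrfβ s) _
        · refine mk2_adj G H f hf (Or.inl ⟨?_, ?_⟩)
          · have e1 : min ((a : Fin 7) : ℕ) 3 = min ((b : Fin 7) : ℕ) 3 := by omega
            rw [e1]
          · intro s
            have e2 : 6 - max ((a : Fin 7) : ℕ) 3 = (6 - max ((b : Fin 7) : ℕ) 3) + 1 := by
              have := b.isLt
              omega
            rw [e2]
            exact (par_iter_step (hrβ s) _).imp Eq.symm SimpleGraph.Adj.symm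
      rcases hrel with h | h
      · exact key t t' h
      · exact (key t' t h).imp Eq.symm SimpleGraph.Adj.symm
  · -- at time 0 we get `j ∘ Ωf₁`
    intro u
    refine Subtype.ext (Prod.ext ?_ ?_)
    · refine Subtype.ext (Prod.ext rfl ?_)
      funext s
      show (par H)^[min ((0 : Fin 7) : ℕ) 3] (f (u.1 s)) = f (u.1 s)
      rw [show min ((0 : Fin 7) : ℕ) 3 = 0 from rfl, Function.iterate_zero_apply]
    · funext s
      show (par G)^[6 - max ((0 : Fin 7) : ℕ) 3] (u.1 s) = G.pt
      rw [show 6 - max ((0 : Fin 7) : ℕ) 3 = 3 from rfl]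
      exact par_cube hG (loop_rch u.2 s)
  · -- at time 6 we get `f₄ ∘ j'`
    intro u
    refine Subtype.ext (Prod.ext ?_ ?_)
    · refine Subtype.ext (Prod.ext rfl ?_)
      funext s
      show (par H)^[min ((Fin.last 6 : Fin 7) : ℕ) 3] (f (u.1 s)) = H.pt
      rw [show min ((Fin.last 6 : Fin 7) : ℕ) 3 = 3 from rfl]
      exact par_cube hH (loop_rch (loopComp f hmap hf u.2) s)
    · funext s
      show (par G)^[6 - max ((Fin.last 6 : Fin 7) : ℕ) 3] (u.1 s) = u.1 s
      rw [show 6 - max ((Fin.last 6 : Fin 7) : ℕ) 3 = 0 from rfl, Function.iterate_zero_apply]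
  · -- basepoints are preserved
    intro t
    refine Subtype.ext (Prod.ext ?_ ?_)
    · refine Subtype.ext (Prod.ext rfl ?_)
      funext s
      show (par H)^[min ((t : Fin 7) : ℕ) 3] (f G.pt) = H.pt
      rw [hf]
      exact par_iter_pt H _
    · funext s
      show (par G)^[6 - max ((t : Fin 7) : ℕ) 3] G.pt = G.pt
      exact par_iter_pt G _
end

section
/- Let G, H be pointed graphs and l ∈ ℕ. The map Φ sending (the class of) a pointed graph map f : Σ_l G → H to the class of the pointed graph map u ↦ (t ↦ f(u, t)) is a well-defined bijection [Σ_l G, H] → [G, Ω_l H], with inverse Ψ sending the class of g : G → Ω_l H to the class of (u, t) ↦ g(u)(t). Here Ω_l H is the induced subgraph of ΩH on loops of length l. -/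
open SimpleGraph

/-- The A-homotopy class of a pointed graph map. -/
def htpyCl {K G : PtdGraph} (f : PtdMapSub K G) : HtpyCl K G :=
  Quot.mk (fun f g : PtdMapSub K G => PtdHomotopic K G f.1 g.1) f

section Adjunction

open SimpleGraph

/-- Values of a loop of length `l` at times `≤ 0` or `≥ l` are the base point. -/
lemma loop_val_of_base {H : PtdGraph} {l : ℕ} {ω : ℤ → H.V} (hω : IsLoopOfLen H l ω)
    {t : ℤ} (ht : t ≤ 0 ∨ (l : ℤ) ≤ t) : ω t = H.pt := by
  rcases ht with h | h
  · exact hω.1.2.1 t h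
  · rw [hω.1.2.2 t h, hω.2]

lemma pathRel_ptwise {H : PtdGraph} {ω ω' : ℤ → H.V} (h : pathRel H ω ω') (t : ℤ) :
    ω t = ω' t ∨ H.G.Adj (ω t) (ω' t) := by
  obtain ⟨F, hF, h0, h1⟩ := h
  have h01 : (pathI 1).Adj (0 : Fin 2) (1 : Fin 2) :=
    (SimpleGraph.fromRel_adj _ (0 : Fin 2) (1 : Fin 2)).mpr ⟨by decide, Or.inl (by decide)⟩
  have hadj : (pathZ □ pathI 1).Adj (t, 0) (t, 1) := boxProd_adj.mpr (Or.inr ⟨h01, rfl⟩)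
  rcases hF hadj with h' | h'
  · exact Or.inl (by rw [← h0 t, ← h1 t]; exact h')
  · exact Or.inr (by rw [← h0 t, ← h1 t]; exact h')

lemma loopL_adj_ptwise {H : PtdGraph} {l : ℕ} {ω ω' : (LoopGraphL H l).V}
    (h : (LoopGraphL H l).G.Adj ω ω') (t : ℤ) :
    ω.1 t = ω'.1 t ∨ H.G.Adj (ω.1 t) (ω'.1 t) := by
  obtain ⟨-, hr⟩ := (SimpleGraph.fromRel_adj _ _ _).mp h
  rcases hr with h' | h'
  · exact pathRel_ptwise h' t
  · rcases pathRel_ptwise h' t with h'' | h''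
    · exact Or.inl h''.symm
    · exact Or.inr h''.symm

lemma mk_base {G : PtdGraph} {l : ℕ} {p : G.V × ℤ} (hp : SuspBase G l p) :
    Quot.mk (suspRel G l) p = (Susp G l).pt :=
  Quot.sound (Or.inr ⟨hp, Or.inl le_rfl⟩)

lemma susp_mk_rel {G : PtdGraph} {l : ℕ} {H : PtdGraph} {φ : (Susp G l).V → H.V}
    (hφ : IsGraphMap (Susp G l).G H.G φ) {p q : G.V × ℤ} (hpq : (G.G □ pathZ).Adj p q) :
    φ (Quot.mk (suspRel G l) p) = φ (Quot.mk (suspRel G l) q) ∨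
      H.G.Adj (φ (Quot.mk (suspRel G l) p)) (φ (Quot.mk (suspRel G l) q)) := by
  by_cases he : Quot.mk (suspRel G l) p = Quot.mk (suspRel G l) q
  · exact Or.inl (congrArg φ he)
  · exact hφ ((SimpleGraph.fromRel_adj _ _ _).mpr ⟨he, Or.inl ⟨p, q, rfl, rfl, hpq⟩⟩)

/-- The restriction of a pointed map on the suspension to a slice `{u} × I_∞` is a
loop of length `l`. -/
lemma loop_of_suspMap {G : PtdGraph} {l : ℕ} {H : PtdGraph} {φ : (Susp G l).V → H.V}
    (hφ : IsGraphMap (Susp G l).G H.G φ) (hpt : φ (Susp G l).pt = H.pt) (u : G.V) :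
    IsLoopOfLen H l (fun t => φ (Quot.mk (suspRel G l) (u, t))) := by
  have hb : ∀ t : ℤ, SuspBase G l (u, t) → φ (Quot.mk (suspRel G l) (u, t)) = H.pt :=
    fun t ht => by rw [mk_base ht, hpt]
  refine ⟨⟨?_, fun t ht => hb t (Or.inl ht), fun t ht => ?_⟩, hb l (Or.inr (Or.inl le_rfl))⟩
  · intro t t' h
    exact susp_mk_rel hφ (boxProd_adj.mpr (Or.inr ⟨h, rfl⟩))
  · show φ (Quot.mk (suspRel G l) (u, t)) = φ (Quot.mk (suspRel G l) (u, (l : ℤ)))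
    rw [hb t (Or.inr (Or.inl ht)), hb l (Or.inr (Or.inl le_rfl))]

lemma suspLift_wd {G H : PtdGraph} {l : ℕ} {φ : G.V × ℤ → H.V}
    (hb : ∀ p, SuspBase G l p → φ p = H.pt) :
    ∀ p q, suspRel G l p q → φ p = φ q := by
  rintro p q (rfl | ⟨hp, hq⟩)
  · rfl
  · rw [hb p hp, hb q hq]

lemma suspLift_graphMap {G H : PtdGraph} {l : ℕ} {φ : G.V × ℤ → H.V}
    (hb : ∀ p, SuspBase G l p → φ p = H.pt)
    (hstep : ∀ p q : G.V × ℤ, (G.G □ pathZ).Adj p q → φ p = φ q ∨ H.G.Adj (φ p) (φ q)) :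
    IsGraphMap (Susp G l).G H.G (Quot.lift φ (suspLift_wd hb)) := by
  intro a b hab
  obtain ⟨hne, hr⟩ := (SimpleGraph.fromRel_adj _ _ _).mp hab
  rcases hr with ⟨p, q, hp, hq, hpq⟩ | ⟨p, q, hp, hq, hpq⟩
  · subst hp; subst hq
    exact hstep p q hpq
  · subst hp; subst hq
    rcases hstep p q hpq with h | h
    · exact Or.inl h.symm
    · exact Or.inr h.symm

lemma col_graphMap {G H : PtdGraph} {l m : ℕ} {F : (Susp G l).V × Fin (m + 1) → H.V}
    (hF : IsGraphMap ((Susp G l).G □ pathI m) H.G F) (s : Fin (m + 1)) :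
    IsGraphMap (Susp G l).G H.G (fun a => F (a, s)) :=
  fun _ _ h => hF (boxProd_adj.mpr (Or.inl ⟨h, rfl⟩))

lemma fin2_cases (e : Fin 2) : e = 0 ∨ e = 1 := by
  exact (by decide : ∀ e : Fin 2, e = 0 ∨ e = 1) e

/-- Two adjacent columns of a graph map on `Σ_l G ⊗ I_m` give `pathRel`-related loops. -/
lemma twoCol_pathRel {G H : PtdGraph} {l m : ℕ}
    {F : (Susp G l).V × Fin (m + 1) → H.V}
    (hF : IsGraphMap ((Susp G l).G □ pathI m) H.G F)
    {u v : G.V} {s s' : Fin (m + 1)} (huv : (G.G □ pathI m).Adj (u, s) (v, s')) :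
    pathRel H (fun t => F (Quot.mk (suspRel G l) (u, t), s))
      (fun t => F (Quot.mk (suspRel G l) (v, t), s')) := by
  have claim : ∀ t : ℤ,
      F (Quot.mk (suspRel G l) (u, t), s) = F (Quot.mk (suspRel G l) (v, t), s') ∨
      H.G.Adj (F (Quot.mk (suspRel G l) (u, t), s)) (F (Quot.mk (suspRel G l) (v, t), s')) := by
    intro t
    rcases boxProd_adj.mp huv with ⟨hG, hs⟩ | ⟨hI, huv'⟩
    · simp only at hG hs
      subst hs
      exact susp_mk_rel (col_graphMap hF s) (boxProd_adj.mpr (Or.inl ⟨hG, rfl⟩))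
    · simp only at hI huv'
      subst huv'
      exact hF (boxProd_adj.mpr (Or.inr ⟨hI, rfl⟩))
  refine ⟨fun p => F (Quot.mk (suspRel G l) ((if p.2 = 0 then u else v), p.1),
      if p.2 = 0 then s else s'), ?_, fun t => by simp, fun t => by simp⟩
  rintro ⟨t, e⟩ ⟨t', e'⟩ hxy
  rcases boxProd_adj.mp hxy with ⟨hZ, he⟩ | ⟨hI, ht⟩
  · simp only at hZ he
    subst he
    exact susp_mk_rel (col_graphMap hF _) (boxProd_adj.mpr (Or.inr ⟨hZ, rfl⟩))
  · simp only at hI ht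
    subst ht
    have hne : e ≠ e' := ((SimpleGraph.fromRel_adj _ _ _).mp hI).1
    rcases fin2_cases e with rfl | rfl <;> rcases fin2_cases e' with rfl | rfl
    · exact absurd rfl hne
    · simpa using claim t
    · rcases claim t with h | h
      · exact Or.inl (by simpa using h.symm)
      · exact Or.inr (by simpa using h.symm)
    · exact absurd rfl hne

lemma loopL_rel_of_pathRel {H : PtdGraph} {l : ℕ} {ω ω' : (LoopGraphL H l).V}
    (h : pathRel H ω.1 ω'.1) : ω = ω' ∨ (LoopGraphL H l).G.Adj ω ω' := by
  by_cases he : ω = ω'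
  · exact Or.inl he
  · exact Or.inr ((SimpleGraph.fromRel_adj _ _ _).mpr ⟨he, Or.inl h⟩)

lemma slice_graphMap {G H : PtdGraph} {l : ℕ} {f : (Susp G l).V → H.V}
    (hf : IsGraphMap (Susp G l).G H.G f) :
    IsGraphMap ((Susp G l).G □ pathI 0) H.G (fun p => f p.1) := by
  rintro ⟨a, s⟩ ⟨b, s'⟩ h
  rcases boxProd_adj.mp h with ⟨hS, -⟩ | ⟨-, h1⟩
  · exact hf hS
  · exact Or.inl (congrArg f h1)

/-- `Φ` on representatives: restrict a map on the suspension to loops. -/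
def toLoopMap {G H : PtdGraph} {l : ℕ} (f : PtdMapSub (Susp G l) H) :
    PtdMapSub G (LoopGraphL H l) :=
  ⟨fun u => ⟨fun t => f.1 (Quot.mk (suspRel G l) (u, t)), loop_of_suspMap f.2.1 f.2.2 u⟩,
   fun u v h => loopL_rel_of_pathRel
     (twoCol_pathRel (slice_graphMap f.2.1) (boxProd_adj.mpr (Or.inl ⟨h, (rfl : (0 : Fin 1) = 0)⟩))),
   Subtype.ext (funext fun t => by
     show f.1 (Quot.mk (suspRel G l) (G.pt, t)) = H.pt
     rw [show Quot.mk (suspRel G l) (G.pt, t) = (Susp G l).pt from mk_base (Or.inr (Or.inr rfl))]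
     exact f.2.2)⟩

lemma loopFam_base {G H : PtdGraph} {l : ℕ} {g : G.V → (LoopGraphL H l).V}
    (hpt : g G.pt = (LoopGraphL H l).pt) :
    ∀ p : G.V × ℤ, SuspBase G l p → (g p.1).1 p.2 = H.pt := by
  rintro ⟨u, t⟩ (h | h | h)
  · exact loop_val_of_base (g u).2 (Or.inl h)
  · exact loop_val_of_base (g u).2 (Or.inr h)
  · simp only at h
    subst h
    rw [hpt]
    rfl

lemma loopFam_step {G H : PtdGraph} {l : ℕ} {g : G.V → (LoopGraphL H l).V}
    (hg : ∀ ⦃u v⦄, G.G.Adj u v → g u = g v ∨ (LoopGraphL H l).G.Adj (g u) (g v)) :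
    ∀ p q : G.V × ℤ, (G.G □ pathZ).Adj p q →
      (g p.1).1 p.2 = (g q.1).1 q.2 ∨ H.G.Adj ((g p.1).1 p.2) ((g q.1).1 q.2) := by
  rintro ⟨u, t⟩ ⟨v, t'⟩ h
  rcases boxProd_adj.mp h with ⟨hG, ht⟩ | ⟨hZ, hu⟩
  · simp only at hG ht
    subst ht
    rcases hg hG with h' | h'
    · exact Or.inl (congrFun (congrArg Subtype.val h') t)
    · exact loopL_adj_ptwise h' t
  · simp only at hZ hu
    subst hu
    exact (g u).2.1.1 hZ

/-- `Ψ` on representatives: assemble a family of loops into a map on the suspension. -/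
def toSuspMap {G H : PtdGraph} {l : ℕ} (g : PtdMapSub G (LoopGraphL H l)) :
    PtdMapSub (Susp G l) H :=
  ⟨Quot.lift (fun p => (g.1 p.1).1 p.2) (suspLift_wd (loopFam_base g.2.2)),
   suspLift_graphMap (loopFam_base g.2.2) (loopFam_step g.2.1),
   loopFam_base g.2.2 (G.pt, 0) (Or.inl le_rfl)⟩

lemma homotopic_toLoop {G H : PtdGraph} {l : ℕ} (f f' : PtdMapSub (Susp G l) H)
    (h : PtdHomotopic (Susp G l) H f.1 f'.1) :
    PtdHomotopic G (LoopGraphL H l) (toLoopMap f).1 (toLoopMap f').1 := by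
  obtain ⟨m, F, hF, h0, hm, hpt⟩ := h
  refine ⟨m, fun x => ⟨fun t => F (Quot.mk (suspRel G l) (x.1, t), x.2),
      loop_of_suspMap (col_graphMap hF x.2) (hpt x.2) x.1⟩, ?_, ?_, ?_, ?_⟩
  · rintro ⟨u, s⟩ ⟨v, s'⟩ hxy
    exact loopL_rel_of_pathRel (twoCol_pathRel hF hxy)
  · intro u
    exact Subtype.ext (funext fun t => h0 _)
  · intro u
    exact Subtype.ext (funext fun t => hm _)
  · intro s
    refine Subtype.ext (funext fun t => ?_)
    show F (Quot.mk (suspRel G l) (G.pt, t), s) = H.pt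
    rw [show Quot.mk (suspRel G l) (G.pt, t) = (Susp G l).pt from mk_base (Or.inr (Or.inr rfl))]
    exact hpt s

lemma homotopic_toSusp {G H : PtdGraph} {l : ℕ} (g g' : PtdMapSub G (LoopGraphL H l))
    (h : PtdHomotopic G (LoopGraphL H l) g.1 g'.1) :
    PtdHomotopic (Susp G l) H (toSuspMap g).1 (toSuspMap g').1 := by
  obtain ⟨m, F', hF', h0, hm, hpt⟩ := h
  have hbs : ∀ s : Fin (m + 1), ∀ p : G.V × ℤ, SuspBase G l p → (F' (p.1, s)).1 p.2 = H.pt :=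
    fun s => loopFam_base (g := fun u => F' (u, s)) (hpt s)
  have hss : ∀ s : Fin (m + 1), ∀ p q : G.V × ℤ, (G.G □ pathZ).Adj p q →
      (F' (p.1, s)).1 p.2 = (F' (q.1, s)).1 q.2 ∨
        H.G.Adj ((F' (p.1, s)).1 p.2) ((F' (q.1, s)).1 q.2) :=
    fun s => loopFam_step (g := fun u => F' (u, s))
      (fun u v h => hF' (show (G.G □ pathI m).Adj (u, s) (v, s) from
        boxProd_adj.mpr (Or.inl ⟨h, rfl⟩)))
  refine ⟨m, fun x => Quot.lift (fun p => (F' (p.1, x.2)).1 p.2) (suspLift_wd (hbs x.2)) x.1,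
    ?_, ?_, ?_, ?_⟩
  · rintro ⟨a, s⟩ ⟨b, s'⟩ hxy
    rcases boxProd_adj.mp hxy with ⟨hS, he⟩ | ⟨hI, hab⟩
    · simp only at hS he
      subst he
      exact suspLift_graphMap (hbs s) (hss s) hS
    · simp only at hI hab
      subst hab
      induction a using Quot.ind with
      | _ p =>
        rcases hF' (show (G.G □ pathI m).Adj (p.1, s) (p.1, s') from
            boxProd_adj.mpr (Or.inr ⟨hI, rfl⟩)) with h' | h'
        · exact Or.inl (congrFun (congrArg Subtype.val h') p.2)
        · exact loopL_adj_ptwise h' p.2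
  · intro a
    induction a using Quot.ind with
    | _ p => show (F' (p.1, 0)).1 p.2 = (g.1 p.1).1 p.2; rw [h0 p.1]
  · intro a
    induction a using Quot.ind with
    | _ p => show (F' (p.1, Fin.last m)).1 p.2 = (g'.1 p.1).1 p.2; rw [hm p.1]
  · intro s
    exact hbs s (G.pt, 0) (Or.inl le_rfl)

lemma toSusp_toLoop {G H : PtdGraph} {l : ℕ} (f : PtdMapSub (Susp G l) H) :
    toSuspMap (toLoopMap f) = f := by
  apply Subtype.ext
  funext a
  induction a using Quot.ind with
  | _ p => rfl

lemma toLoop_toSusp {G H : PtdGraph} {l : ℕ} (g : PtdMapSub G (LoopGraphL H l)) :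
    toLoopMap (toSuspMap g) = g :=
  Subtype.ext (funext fun _ => Subtype.ext rfl)

end Adjunction

/-- the adjunction `[Σ_l G, H] ≅ [G, Ω_l H]`: the map `Φ` sending the
class of `f` to the class of `u ↦ (t ↦ f(u, t))` is a well-defined bijection, with
inverse `Ψ` sending the class of `g` to the class of `(u, t) ↦ g(u)(t)`. -/
theorem suspension_loop_adjunction (G H : PtdGraph) (l : ℕ) :
    ∃ Φ : HtpyCl (Susp G l) H ≃ HtpyCl G (LoopGraphL H l),
      (∀ f : PtdMapSub (Susp G l) H,
        ∃ g : PtdMapSub G (LoopGraphL H l),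
          (∀ (u : G.V) (t : ℤ), (g.1 u).1 t = f.1 (Quot.mk (suspRel G l) (u, t))) ∧
          Φ (htpyCl f) = htpyCl g) ∧
      (∀ g : PtdMapSub G (LoopGraphL H l),
        ∃ f : PtdMapSub (Susp G l) H,
          (∀ (u : G.V) (t : ℤ), (g.1 u).1 t = f.1 (Quot.mk (suspRel G l) (u, t))) ∧
          Φ.symm (htpyCl g) = htpyCl f) := by
  refine ⟨⟨Quot.map toLoopMap homotopic_toLoop, Quot.map toSuspMap homotopic_toSusp,
    ?_, ?_⟩, ?_, ?_⟩
  · intro x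
    induction x using Quot.ind with
    | _ f => exact congrArg (Quot.mk _) (toSusp_toLoop f)
  · intro x
    induction x using Quot.ind with
    | _ g => exact congrArg (Quot.mk _) (toLoop_toSusp g)
  · intro f
    exact ⟨toLoopMap f, fun u t => rfl, rfl⟩
  · intro g
    exact ⟨toSuspMap g, fun u t => rfl, rfl⟩
end

section
/- Let G' → G → G'' be a sequence of pointed graph maps that is exact in the naive pointed discrete homotopy category hGraph_*. Then the looped sequence ΩG' → ΩG → ΩG'' (obtained by applying the loop graph functor Ω to the maps) is also exact in hGraph_*. -/
open SimpleGraph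

namespace LoopedExactAux

open SimpleGraph

lemma pathI1_adj_01 : (pathI 1).Adj 0 1 :=
  (SimpleGraph.fromRel_adj _ _ _).mpr ⟨by decide, Or.inl (by decide)⟩

lemma box_t01 {T : PtdGraph} {W : ℤ × Fin 2 → T.V}
    (hW : IsGraphMap (pathZ □ pathI 1) T.G W) (t : ℤ) :
    W (t, 0) = W (t, 1) ∨ T.G.Adj (W (t, 0)) (W (t, 1)) :=
  hW (SimpleGraph.boxProd_adj.mpr (Or.inr ⟨pathI1_adj_01, rfl⟩))

noncomputable def loopLen {T : PtdGraph} (ω : (LoopGraph T).V) : ℕ := ω.2.choose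

lemma loopLen_spec {T : PtdGraph} (ω : (LoopGraph T).V) :
    IsLoopOfLen T (loopLen ω) ω.1 := ω.2.choose_spec

lemma loop_gm {T : PtdGraph} (ω : (LoopGraph T).V) : IsGraphMap pathZ T.G ω.1 :=
  (loopLen_spec ω).1.1

lemma loop_le0 {T : PtdGraph} (ω : (LoopGraph T).V) {t : ℤ} (h : t ≤ 0) : ω.1 t = T.pt :=
  (loopLen_spec ω).1.2.1 t h

lemma loop_ge {T : PtdGraph} (ω : (LoopGraph T).V) {t : ℤ} (h : (loopLen ω : ℤ) ≤ t) :
    ω.1 t = T.pt := by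
  rw [(loopLen_spec ω).1.2.2 t h]; exact (loopLen_spec ω).2

lemma loop_adj_eval {T : PtdGraph} {ω ω' : (LoopGraph T).V}
    (h : ω = ω' ∨ (LoopGraph T).G.Adj ω ω') (t : ℤ) :
    ω.1 t = ω'.1 t ∨ T.G.Adj (ω.1 t) (ω'.1 t) := by
  rcases h with rfl | h
  · exact Or.inl rfl
  obtain ⟨-, hr⟩ := (SimpleGraph.fromRel_adj _ _ _).mp h
  rcases hr with ⟨W, hW, h0, h1⟩ | ⟨W, hW, h0, h1⟩
  · have := box_t01 hW t; rw [h0 t, h1 t] at this; exact this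
  · have := box_t01 hW t; rw [h0 t, h1 t] at this
    rcases this with h' | h'
    · exact Or.inl h'.symm
    · exact Or.inr h'.symm

lemma evalMap {K T : PtdGraph} {ψ : K.V → (LoopGraph T).V}
    (hψ : IsGraphMap K.G (LoopGraph T).G ψ) :
    IsGraphMap (K.G □ pathZ) T.G (fun p => (ψ p.1).1 p.2) := by
  rintro ⟨k, t⟩ ⟨k', t'⟩ h
  rcases SimpleGraph.boxProd_adj.mp h with ⟨hK, ht⟩ | ⟨ht, hk⟩ <;> dsimp at *
  · subst ht
    exact loop_adj_eval (hψ hK) t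
  · subst hk
    exact loop_gm (ψ k) ht

lemma evalMap2 {K T : PtdGraph} {m : ℕ} {F : K.V × Fin (m + 1) → (LoopGraph T).V}
    (hF : IsGraphMap (K.G □ pathI m) (LoopGraph T).G F) :
    IsGraphMap ((K.G □ pathZ) □ pathI m) T.G
      (fun q => (F (q.1.1, q.2)).1 q.1.2) := by
  rintro ⟨⟨k, t⟩, s⟩ ⟨⟨k', t'⟩, s'⟩ h
  rcases SimpleGraph.boxProd_adj.mp h with ⟨hin, hs⟩ | ⟨hs, hkt⟩ <;> dsimp at *
  · subst hs
    rcases SimpleGraph.boxProd_adj.mp hin with ⟨hK, ht⟩ | ⟨ht, hk⟩ <;> dsimp at *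
    · subst ht
      exact loop_adj_eval
        (hF (show (K.G □ pathI m).Adj (k, s) (k', s) from
          SimpleGraph.boxProd_adj.mpr (Or.inl ⟨hK, rfl⟩))) t
    · subst hk
      exact loop_gm (F (k, s)) ht
  · injection hkt with hk ht
    subst hk; subst ht
    exact loop_adj_eval
      (hF (show (K.G □ pathI m).Adj (k, s) (k, s') from
        SimpleGraph.boxProd_adj.mpr (Or.inr ⟨hs, rfl⟩))) t

end LoopedExactAux
namespace LoopedExactAux

open SimpleGraph

/-- Vertices of `K ⊗ I_∞` to be collapsed: `t ≤ 0`, `t ≥ l k`, or `k` the base vertex. -/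
abbrev Bset (K : PtdGraph) (l : K.V → ℕ) (p : K.V × ℤ) : Prop :=
  p.2 ≤ 0 ∨ (l p.1 : ℤ) ≤ p.2 ∨ p.1 = K.pt

abbrev qrel (K : PtdGraph) (l : K.V → ℕ) (p q : K.V × ℤ) : Prop :=
  p = q ∨ (Bset K l p ∧ Bset K l q)

/-- The variable-length reduced suspension `K'`. -/
def Kq (K : PtdGraph) (l : K.V → ℕ) : PtdGraph where
  V := Quot (qrel K l)
  G := SimpleGraph.fromRel (fun a b => ∃ p q : K.V × ℤ,
    Quot.mk (qrel K l) p = a ∧ Quot.mk (qrel K l) q = b ∧ (K.G □ pathZ).Adj p q)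
  pt := Quot.mk (qrel K l) (K.pt, 0)

lemma mk_base (K : PtdGraph) (l : K.V → ℕ) {p : K.V × ℤ} (hp : Bset K l p) :
    Quot.mk (qrel K l) p = (Kq K l).pt :=
  Quot.sound (Or.inr ⟨hp, Or.inl le_rfl⟩)

lemma mk_step (K : PtdGraph) (l : K.V → ℕ) {p q : K.V × ℤ} (h : (K.G □ pathZ).Adj p q) :
    Quot.mk (qrel K l) p = Quot.mk (qrel K l) q ∨
      (Kq K l).G.Adj (Quot.mk (qrel K l) p) (Quot.mk (qrel K l) q) := by
  by_cases he : Quot.mk (qrel K l) p = Quot.mk (qrel K l) q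
  · exact Or.inl he
  · exact Or.inr ((SimpleGraph.fromRel_adj _ _ _).mpr ⟨he, Or.inl ⟨p, q, rfl, rfl, h⟩⟩)

/-- Descend a map `K ⊗ I_∞ → T` that collapses `Bset` to the quotient. -/
def desc (K : PtdGraph) (l : K.V → ℕ) {T : Type} {tpt : T} (h : K.V × ℤ → T)
    (hB : ∀ p, Bset K l p → h p = tpt) : (Kq K l).V → T :=
  Quot.lift h fun p q hpq => by
    rcases hpq with rfl | ⟨hp, hq⟩
    · rfl
    · rw [hB p hp, hB q hq]

lemma desc_pt (K : PtdGraph) (l : K.V → ℕ) {T : Type} {tpt : T} (h : K.V × ℤ → T)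
    (hB : ∀ p, Bset K l p → h p = tpt) : desc K l h hB (Kq K l).pt = tpt :=
  hB _ (Or.inl le_rfl)

lemma desc_isGraphMap (K : PtdGraph) (l : K.V → ℕ) {T : Type} (TG : SimpleGraph T) {tpt : T}
    (h : K.V × ℤ → T) (hB : ∀ p, Bset K l p → h p = tpt)
    (hh : IsGraphMap (K.G □ pathZ) TG h) :
    IsGraphMap (Kq K l).G TG (desc K l h hB) := by
  intro a b hab
  obtain ⟨-, hr⟩ := (SimpleGraph.fromRel_adj _ _ _).mp hab
  rcases hr with ⟨p, q, ha, hb, hpq⟩ | ⟨p, q, hb, ha, hpq⟩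
  · subst ha; subst hb; exact hh hpq
  · subst ha; subst hb
    rcases hh hpq with h' | h'
    · exact Or.inl h'.symm
    · exact Or.inr h'.symm

/-- Descend a homotopy `(K ⊗ I_∞) ⊗ I_m → T` to the quotient. -/
def descH (K : PtdGraph) (l : K.V → ℕ) {T : Type} {tpt : T} (m : ℕ)
    (H : (K.V × ℤ) × Fin (m + 1) → T)
    (hB : ∀ p s, Bset K l p → H (p, s) = tpt) :
    (Kq K l).V × Fin (m + 1) → T :=
  fun a => Quot.lift (fun p => H (p, a.2)) (fun p q hpq => by
    rcases hpq with rfl | ⟨hp, hq⟩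
    · rfl
    · show H (p, a.2) = H (q, a.2)
      rw [hB p _ hp, hB q _ hq]) a.1

lemma descH_isGraphMap (K : PtdGraph) (l : K.V → ℕ) {T : Type} (TG : SimpleGraph T) {tpt : T}
    (m : ℕ) (H : (K.V × ℤ) × Fin (m + 1) → T)
    (hB : ∀ p s, Bset K l p → H (p, s) = tpt)
    (hh : IsGraphMap ((K.G □ pathZ) □ pathI m) TG H) :
    IsGraphMap ((Kq K l).G □ pathI m) TG (descH K l m H hB) := by
  rintro ⟨a, s⟩ ⟨b, s'⟩ hab
  rcases SimpleGraph.boxProd_adj.mp hab with ⟨hq, hs⟩ | ⟨hs, hV⟩ <;> dsimp at *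
  · subst hs
    obtain ⟨-, hr⟩ := (SimpleGraph.fromRel_adj _ _ _).mp hq
    rcases hr with ⟨p, q, ha, hb, hpq⟩ | ⟨p, q, hb, ha, hpq⟩
    · subst ha; subst hb
      exact hh (show ((K.G □ pathZ) □ pathI m).Adj (p, s) (q, s) from
        SimpleGraph.boxProd_adj.mpr (Or.inl ⟨hpq, rfl⟩))
    · subst ha; subst hb
      rcases hh (show ((K.G □ pathZ) □ pathI m).Adj (p, s) (q, s) from
          SimpleGraph.boxProd_adj.mpr (Or.inl ⟨hpq, rfl⟩)) with h' | h'
      · exact Or.inl h'.symm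
      · exact Or.inr h'.symm
  · subst hV
    obtain ⟨p, hp⟩ := Quot.exists_rep a
    subst hp
    exact hh (show ((K.G □ pathZ) □ pathI m).Adj (p, s) (p, s') from
      SimpleGraph.boxProd_adj.mpr (Or.inr ⟨hs, rfl⟩))

end LoopedExactAux
namespace LoopedExactAux

open SimpleGraph

/-- The loop in `T` obtained by restricting a map on the quotient to the slice over `k`. -/
def lift0 (K : PtdGraph) (l : K.V → ℕ) (T : PtdGraph) (n : ℕ)
    (H' : (Kq K l).V × Fin (n + 1) → T.V) (k : K.V) (s : Fin (n + 1)) : ℤ → T.V :=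
  fun t => H' (Quot.mk (qrel K l) (k, t), s)

lemma lift0_gm (K : PtdGraph) (l : K.V → ℕ) (T : PtdGraph) (n : ℕ)
    (H' : (Kq K l).V × Fin (n + 1) → T.V)
    (hH' : IsGraphMap ((Kq K l).G □ pathI n) T.G H') (k : K.V) (s : Fin (n + 1)) :
    IsGraphMap pathZ T.G (lift0 K l T n H' k s) := by
  intro t t' ht
  have hbox : (K.G □ pathZ).Adj (k, t) (k, t') :=
    SimpleGraph.boxProd_adj.mpr (Or.inr ⟨ht, rfl⟩)
  rcases mk_step K l hbox with he | ha
  · exact Or.inl (congrArg (fun a => H' (a, s)) he)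
  · exact hH' (show ((Kq K l).G □ pathI n).Adj (Quot.mk (qrel K l) (k, t), s)
      (Quot.mk (qrel K l) (k, t'), s) from SimpleGraph.boxProd_adj.mpr (Or.inl ⟨ha, rfl⟩))

lemma lift0_isLoop (K : PtdGraph) (l : K.V → ℕ) (T : PtdGraph) (n : ℕ)
    (H' : (Kq K l).V × Fin (n + 1) → T.V)
    (hH' : IsGraphMap ((Kq K l).G □ pathI n) T.G H')
    (hbase : ∀ s, H' ((Kq K l).pt, s) = T.pt) (k : K.V) (s : Fin (n + 1)) :
    IsLoopOfLen T (l k) (lift0 K l T n H' k s) := by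
  have hvan : ∀ t : ℤ, Bset K l (k, t) → lift0 K l T n H' k s t = T.pt := by
    intro t hB
    show H' _ = _
    rw [mk_base K l hB, hbase s]
  refine ⟨⟨lift0_gm K l T n H' hH' k s, ?_, ?_⟩, ?_⟩
  · intro t ht; exact hvan t (Or.inl ht)
  · intro t ht
    rw [hvan t (Or.inr (Or.inl ht)), hvan (l k) (Or.inr (Or.inl le_rfl))]
  · exact hvan (l k) (Or.inr (Or.inl le_rfl))

lemma lift0_pathRel (K : PtdGraph) (l : K.V → ℕ) (T : PtdGraph) (n : ℕ)
    (H' : (Kq K l).V × Fin (n + 1) → T.V)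
    (hH' : IsGraphMap ((Kq K l).G □ pathI n) T.G H')
    {k k' : K.V} {s s' : Fin (n + 1)} (h : (K.G □ pathI n).Adj (k, s) (k', s')) :
    pathRel T (lift0 K l T n H' k s) (lift0 K l T n H' k' s') := by
  have key : ∀ t : ℤ, lift0 K l T n H' k s t = lift0 K l T n H' k' s' t ∨
      T.G.Adj (lift0 K l T n H' k s t) (lift0 K l T n H' k' s' t) := by
    intro t
    rcases SimpleGraph.boxProd_adj.mp h with ⟨hK, hs⟩ | ⟨hs, hk⟩ <;> dsimp at *
    · subst hs
      have hbox : (K.G □ pathZ).Adj (k, t) (k', t) :=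
        SimpleGraph.boxProd_adj.mpr (Or.inl ⟨hK, rfl⟩)
      rcases mk_step K l hbox with he | ha
      · exact Or.inl (congrArg (fun a => H' (a, s)) he)
      · exact hH' (show ((Kq K l).G □ pathI n).Adj (Quot.mk (qrel K l) (k, t), s)
          (Quot.mk (qrel K l) (k', t), s) from SimpleGraph.boxProd_adj.mpr (Or.inl ⟨ha, rfl⟩))
    · subst hk
      exact hH' (show ((Kq K l).G □ pathI n).Adj (Quot.mk (qrel K l) (k, t), s)
        (Quot.mk (qrel K l) (k, t), s') from SimpleGraph.boxProd_adj.mpr (Or.inr ⟨hs, rfl⟩))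
  refine ⟨fun q => if q.2 = 0 then lift0 K l T n H' k s q.1 else lift0 K l T n H' k' s' q.1,
    ?_, fun t => by simp, fun t => by simp⟩
  rintro ⟨t, i⟩ ⟨t', i'⟩ hadj
  rcases SimpleGraph.boxProd_adj.mp hadj with ⟨ht, hi⟩ | ⟨hi, ht⟩ <;> dsimp at *
  · subst hi
    by_cases h0 : i = 0 <;> simp only [h0, if_pos, if_neg, ite_true, ite_false]
    · exact lift0_gm K l T n H' hH' k s ht
    · exact lift0_gm K l T n H' hH' k' s' ht
  · subst ht
    have h2 : (i = 0 ∧ i' = 1) ∨ (i = 1 ∧ i' = 0) := by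
      obtain ⟨hne, -⟩ := (SimpleGraph.fromRel_adj _ _ _).mp hi
      fin_cases i <;> fin_cases i' <;> simp_all
    rcases h2 with ⟨rfl, rfl⟩ | ⟨rfl, rfl⟩ <;>
      simp only [ite_true, ite_false, if_pos, if_neg, one_ne_zero, reduceIte]
    · exact key t
    · rcases key t with h' | h'
      · exact Or.inl h'.symm
      · exact Or.inr h'.symm

/-- The map `K ⊗ I_n → ΩT` obtained from a homotopy on the quotient. -/
def liftQ (K : PtdGraph) (l : K.V → ℕ) (T : PtdGraph) (n : ℕ)
    (H' : (Kq K l).V × Fin (n + 1) → T.V)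
    (hH' : IsGraphMap ((Kq K l).G □ pathI n) T.G H')
    (hbase : ∀ s, H' ((Kq K l).pt, s) = T.pt) :
    K.V × Fin (n + 1) → (LoopGraph T).V :=
  fun p => ⟨lift0 K l T n H' p.1 p.2, l p.1, lift0_isLoop K l T n H' hH' hbase p.1 p.2⟩

lemma liftQ_isGraphMap (K : PtdGraph) (l : K.V → ℕ) (T : PtdGraph) (n : ℕ)
    (H' : (Kq K l).V × Fin (n + 1) → T.V)
    (hH' : IsGraphMap ((Kq K l).G □ pathI n) T.G H')
    (hbase : ∀ s, H' ((Kq K l).pt, s) = T.pt) :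
    IsGraphMap (K.G □ pathI n) (LoopGraph T).G (liftQ K l T n H' hH' hbase) := by
  rintro ⟨k, s⟩ ⟨k', s'⟩ h
  by_cases he : liftQ K l T n H' hH' hbase (k, s) = liftQ K l T n H' hH' hbase (k', s')
  · exact Or.inl he
  · exact Or.inr ((SimpleGraph.fromRel_adj _ _ _).mpr
      ⟨he, Or.inl (lift0_pathRel K l T n H' hH' h)⟩)

end LoopedExactAux
open LoopedExactAux in
/-- if `G' → G → G''` is exact in `hGraph_*`, then the looped sequence
`ΩG' → ΩG → ΩG''` is also exact in `hGraph_*`. -/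
theorem looped_sequence_exact (G₁ G₂ G₃ : PtdGraph) (f : G₁.V → G₂.V) (g : G₂.V → G₃.V)
    (hf : IsPtdMap G₁ G₂ f) (hg : IsPtdMap G₂ G₃ g)
    (hex : ExactSeq G₁ G₂ G₃ f g) :
    ExactSeq (LoopGraph G₁) (LoopGraph G₂) (LoopGraph G₃)
      (OmegaMap G₁ G₂ f hf.1 hf.2) (OmegaMap G₂ G₃ g hg.1 hg.2) := by
  intro K ψ hψ
  constructor
  · -- forward: a nullhomotopy of Ωg∘ψ gives a lift through Ωf
    rintro ⟨m, F, hF, F0, Fl, Fpt⟩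
    obtain ⟨l, hl1, hl2⟩ : ∃ l : K.V → ℕ, (∀ k, loopLen (ψ k) ≤ l k) ∧
        (∀ k s, loopLen (F (k, s)) ≤ l k) :=
      ⟨fun k => max (loopLen (ψ k))
          ((Finset.univ : Finset (Fin (m + 1))).sup fun s => loopLen (F (k, s))),
        fun k => le_max_left _ _,
        fun k s => show loopLen (F (k, s)) ≤ max (loopLen (ψ k))
            ((Finset.univ : Finset (Fin (m + 1))).sup fun s => loopLen (F (k, s))) from
          le_trans (Finset.le_sup (f := fun s => loopLen (F (k, s))) (Finset.mem_univ s)) (le_max_right _ _)⟩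
    have hψB : ∀ p, Bset K l p → (ψ p.1).1 p.2 = G₂.pt := by
      rintro ⟨k, t⟩ (h | h | h)
      · exact loop_le0 (ψ k) h
      · refine loop_ge (ψ k) ?_
        have := hl1 k
        dsimp at h ⊢; omega
      · dsimp at h; subst h; rw [hψ.2]; rfl
    have hΨptd : IsPtdMap (Kq K l) G₂ (desc K l (fun p => (ψ p.1).1 p.2) hψB) :=
      ⟨desc_isGraphMap K l G₂.G _ hψB (evalMap hψ.1), desc_pt K l _ hψB⟩
    have hHB : ∀ (p : K.V × ℤ) s, Bset K l p → (F (p.1, s)).1 p.2 = G₃.pt := by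
      rintro ⟨k, t⟩ s (h | h | h)
      · exact loop_le0 _ h
      · refine loop_ge _ ?_
        have := hl2 k s
        dsimp at h ⊢; omega
      · dsimp at h; subst h; rw [Fpt s]; rfl
    have hcst : PtdHomotopic (Kq K l) G₃
        (g ∘ desc K l (fun p => (ψ p.1).1 p.2) hψB) (fun _ => G₃.pt) := by
      refine ⟨m, descH K l m (fun q => (F (q.1.1, q.2)).1 q.1.2) hHB,
        descH_isGraphMap K l G₃.G m _ hHB (evalMap2 hF), ?_, ?_, ?_⟩
      · intro a
        obtain ⟨⟨k, t⟩, rfl⟩ := Quot.exists_rep a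
        show (F (k, 0)).1 t = g ((ψ k).1 t)
        rw [F0 k]; rfl
      · intro a
        obtain ⟨⟨k, t⟩, rfl⟩ := Quot.exists_rep a
        show (F (k, Fin.last m)).1 t = G₃.pt
        rw [Fl k]; rfl
      · intro s
        show (F (K.pt, s)).1 0 = G₃.pt
        rw [Fpt s]; rfl
    obtain ⟨φ', hφ', n, P, hPgm, P0, Pl, Ppt⟩ := (hex (Kq K l) _ hΨptd).mp hcst
    have hH'0 : IsGraphMap ((Kq K l).G □ pathI 0) G₁.G
        (fun a : (Kq K l).V × Fin 1 => φ' a.1) := by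
      rintro ⟨a, s⟩ ⟨b, s'⟩ h
      rcases SimpleGraph.boxProd_adj.mp h with ⟨hq, -⟩ | ⟨-, hab⟩
      · exact hφ'.1 hq
      · exact Or.inl (congrArg φ' hab)
    have hbase0 : ∀ s : Fin 1,
        (fun a : (Kq K l).V × Fin 1 => φ' a.1) ((Kq K l).pt, s) = G₁.pt :=
      fun _ => hφ'.2
    refine ⟨fun k => liftQ K l G₁ 0 _ hH'0 hbase0 (k, 0), ⟨?_, ?_⟩, ?_⟩
    · intro k k' h
      exact liftQ_isGraphMap K l G₁ 0 _ hH'0 hbase0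
        (show (K.G □ pathI 0).Adj (k, 0) (k', 0) from
          SimpleGraph.boxProd_adj.mpr (Or.inl ⟨h, rfl⟩))
    · apply Subtype.ext; funext t
      show φ' (Quot.mk (qrel K l) (K.pt, t)) = G₁.pt
      rw [mk_base K l (Or.inr (Or.inr rfl)), hφ'.2]
    · refine ⟨n, liftQ K l G₂ n P hPgm Ppt, liftQ_isGraphMap K l G₂ n P hPgm Ppt, ?_, ?_, ?_⟩
      · intro k
        apply Subtype.ext; funext t
        show P (Quot.mk (qrel K l) (k, t), 0) = f (φ' (Quot.mk (qrel K l) (k, t)))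
        exact P0 _
      · intro k
        apply Subtype.ext; funext t
        show P (Quot.mk (qrel K l) (k, t), Fin.last n) = (ψ k).1 t
        exact Pl _
      · intro s
        apply Subtype.ext; funext t
        show P (Quot.mk (qrel K l) (K.pt, t), s) = G₂.pt
        rw [mk_base K l (Or.inr (Or.inr rfl)), Ppt s]
  · -- backward: a lift through Ωf gives a nullhomotopy of Ωg∘ψ
    rintro ⟨φ, hφ, m, P, hPgm, P0, Pl, Ppt⟩
    obtain ⟨l, hl0, hl1, hl2⟩ : ∃ l : K.V → ℕ, (∀ k, loopLen (φ k) ≤ l k) ∧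
        (∀ k, loopLen (ψ k) ≤ l k) ∧ (∀ k s, loopLen (P (k, s)) ≤ l k) :=
      ⟨fun k => max (loopLen (φ k)) (max (loopLen (ψ k))
          ((Finset.univ : Finset (Fin (m + 1))).sup fun s => loopLen (P (k, s)))),
        fun k => le_max_left _ _,
        fun k => show loopLen (ψ k) ≤ max (loopLen (φ k)) (max (loopLen (ψ k))
            ((Finset.univ : Finset (Fin (m + 1))).sup fun s => loopLen (P (k, s)))) from
          le_trans (le_max_left _ _) (le_max_right _ _),
        fun k s => show loopLen (P (k, s)) ≤ max (loopLen (φ k)) (max (loopLen (ψ k))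
            ((Finset.univ : Finset (Fin (m + 1))).sup fun s => loopLen (P (k, s)))) from
          le_trans (Finset.le_sup (f := fun s => loopLen (P (k, s))) (Finset.mem_univ s))
            (le_trans (le_max_right _ _) (le_max_right _ _))⟩
    have hψB : ∀ p, Bset K l p → (ψ p.1).1 p.2 = G₂.pt := by
      rintro ⟨k, t⟩ (h | h | h)
      · exact loop_le0 (ψ k) h
      · refine loop_ge (ψ k) ?_
        have := hl1 k
        dsimp at h ⊢; omega
      · dsimp at h; subst h; rw [hψ.2]; rfl
    have hφB : ∀ p, Bset K l p → (φ p.1).1 p.2 = G₁.pt := by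
      rintro ⟨k, t⟩ (h | h | h)
      · exact loop_le0 (φ k) h
      · refine loop_ge (φ k) ?_
        have := hl0 k
        dsimp at h ⊢; omega
      · dsimp at h; subst h; rw [hφ.2]; rfl
    have hPB : ∀ (p : K.V × ℤ) s, Bset K l p → (P (p.1, s)).1 p.2 = G₂.pt := by
      rintro ⟨k, t⟩ s (h | h | h)
      · exact loop_le0 _ h
      · refine loop_ge _ ?_
        have := hl2 k s
        dsimp at h ⊢; omega
      · dsimp at h; subst h; rw [Ppt s]; rfl
    have hΨptd : IsPtdMap (Kq K l) G₂ (desc K l (fun p => (ψ p.1).1 p.2) hψB) :=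
      ⟨desc_isGraphMap K l G₂.G _ hψB (evalMap hψ.1), desc_pt K l _ hψB⟩
    have hΦptd : IsPtdMap (Kq K l) G₁ (desc K l (fun p => (φ p.1).1 p.2) hφB) :=
      ⟨desc_isGraphMap K l G₁.G _ hφB (evalMap hφ.1), desc_pt K l _ hφB⟩
    have hhom : PtdHomotopic (Kq K l) G₂
        (f ∘ desc K l (fun p => (φ p.1).1 p.2) hφB)
        (desc K l (fun p => (ψ p.1).1 p.2) hψB) := by
      refine ⟨m, descH K l m (fun q => (P (q.1.1, q.2)).1 q.1.2) hPB,
        descH_isGraphMap K l G₂.G m _ hPB (evalMap2 hPgm), ?_, ?_, ?_⟩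
      · intro a
        obtain ⟨⟨k, t⟩, rfl⟩ := Quot.exists_rep a
        show (P (k, 0)).1 t = f ((φ k).1 t)
        rw [P0 k]; rfl
      · intro a
        obtain ⟨⟨k, t⟩, rfl⟩ := Quot.exists_rep a
        show (P (k, Fin.last m)).1 t = (ψ k).1 t
        rw [Pl k]
      · intro s
        show (P (K.pt, s)).1 0 = G₂.pt
        rw [Ppt s]; rfl
    obtain ⟨n, H', hH'gm, H0, Hl, Hpt⟩ :=
      (hex (Kq K l) _ hΨptd).mpr ⟨_, hΦptd, hhom⟩
    refine ⟨n, liftQ K l G₃ n H' hH'gm Hpt, liftQ_isGraphMap K l G₃ n H' hH'gm Hpt, ?_, ?_, ?_⟩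
    · intro k
      apply Subtype.ext; funext t
      show H' (Quot.mk (qrel K l) (k, t), 0) = g ((ψ k).1 t)
      exact H0 _
    · intro k
      apply Subtype.ext; funext t
      show H' (Quot.mk (qrel K l) (k, t), Fin.last n) = G₃.pt
      exact Hl _
    · intro s
      apply Subtype.ext; funext t
      show H' (Quot.mk (qrel K l) (K.pt, t), s) = G₃.pt
      rw [mk_base K l (Or.inr (Or.inr rfl)), Hpt s]
end
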